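/- arXiv:1506.06252 — 3 statements merged into one kernel-verified Lean document; each statement's English description precedes it below -/
import Mathlib

section
/- For the root system D_ℓ with ℓ = 2k even, the element λ = (α_1 + α_3 + α_5 + ... + α_{ℓ-3} + α_ℓ)/2 satisfies: λ pairs integrally with every coroot α^∨ (with values in {-1,0,1} on simple coroots), λ is orthogonal to the fundamental coweight ω_{ℓ-1}^∨, λ is not in the root lattice Q, and the character lattice X = {μ ∈ P : ⟨μ, ω_{ℓ-1}^∨⟩ ∈ Z} satisfies X = ⟨Q, λ⟩. -/
open scoped BigOperators

noncomputable section

/-- The standard pairing with a fixed vector, as an additive homomorphism. -/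
def dotHom {n : ℕ} (a : Fin n → ℚ) : (Fin n → ℚ) →+ ℚ :=
  AddMonoidHom.mk' (fun x => ∑ j, a j * x j) (by
    intro x y
    simp [Pi.add_apply, mul_add, Finset.sum_add_distrib])

/-- `e_j - e_{j+1}` in `ℚ^ℓ` (0-indexed); this is the Bourbaki simple root
`α_{j+1}` of `D_ℓ` for `j + 2 ≤ ℓ`. -/
def chainRoot (ℓ : ℕ) (j : ℕ) : Fin ℓ → ℚ :=
  fun i => (if (i : ℕ) = j then 1 else 0) - (if (i : ℕ) = j + 1 then 1 else 0)

/-- The fork root `α_ℓ = e_{ℓ-2} + e_{ℓ-1}` of `D_ℓ` (0-indexed). -/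
def forkRoot (ℓ : ℕ) : Fin ℓ → ℚ :=
  fun i => (if (i : ℕ) = ℓ - 2 then 1 else 0) + (if (i : ℕ) = ℓ - 1 then 1 else 0)

/-- The simple roots (= simple coroots, `D_ℓ` being simply laced) of `D_ℓ`:
`rootD ℓ j = α_{j+1}`. -/
def rootD (ℓ : ℕ) (j : Fin ℓ) : Fin ℓ → ℚ :=
  if (j : ℕ) + 1 < ℓ then chainRoot ℓ j else forkRoot ℓ

/-- The root lattice `Q` of `D_ℓ`. -/
def rootLatticeD (ℓ : ℕ) : AddSubgroup (Fin ℓ → ℚ) :=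
  AddSubgroup.closure (Set.range (rootD ℓ))

/-- The weight lattice `P` of `D_ℓ`: vectors pairing integrally with every
simple coroot. -/
def weightLatticeD (ℓ : ℕ) : AddSubgroup (Fin ℓ → ℚ) :=
  ⨅ j : Fin ℓ, AddSubgroup.comap (dotHom (rootD ℓ j)) (AddSubgroup.zmultiples (1 : ℚ))

/-- The fundamental coweight `ω_{ℓ-1}^∨ = ½(e_1 + ⋯ + e_{ℓ-1} - e_ℓ)` of `D_ℓ`. -/
def omegaD (ℓ : ℕ) : Fin ℓ → ℚ :=
  fun i => if (i : ℕ) = ℓ - 1 then -(1 / 2) else 1 / 2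

/-- The weight `λ = (α₁ + α₃ + ⋯ + α_{ℓ-3} + α_ℓ)/2` of `D_ℓ`, `ℓ` even. -/
def lamD (ℓ : ℕ) : Fin ℓ → ℚ :=
  (1 / 2 : ℚ) •
    ((∑ j ∈ (Finset.range (ℓ - 3)).filter Even, chainRoot ℓ j) + forkRoot ℓ)

/-- The character lattice `X` of the half-spin group of type `D_ℓ`: weights
pairing integrally with the fundamental coweight `ω_{ℓ-1}^∨` (equivalently with
the whole cocharacter lattice `X^∨ = ⟨Q^∨, ω_{ℓ-1}^∨⟩`). -/
def halfSpinCharLattice (ℓ : ℕ) : AddSubgroup (Fin ℓ → ℚ) :=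
  weightLatticeD ℓ ⊓ AddSubgroup.comap (dotHom (omegaD ℓ)) (AddSubgroup.zmultiples (1 : ℚ))

namespace HalfSpinAux

lemma mem_zmul (q : ℚ) : q ∈ AddSubgroup.zmultiples (1:ℚ) ↔ ∃ n : ℤ, q = n := by
  rw [AddSubgroup.mem_zmultiples_iff]
  constructor
  · rintro ⟨k, hk⟩; exact ⟨k, by simpa using hk.symm⟩
  · rintro ⟨n, hn⟩; exact ⟨n, by simp [hn]⟩

lemma dotHom_apply {n : ℕ} (a x : Fin n → ℚ) : dotHom a x = ∑ j, a j * x j := rfl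

lemma sum_if_eq {ℓ : ℕ} (f : Fin ℓ → ℚ) (a : ℕ) (h : a < ℓ) :
    (∑ i : Fin ℓ, if (i : ℕ) = a then f i else 0) = f ⟨a, h⟩ := by
  rw [Finset.sum_eq_single (⟨a, h⟩ : Fin ℓ)]
  · simp
  · intro b _ hb
    have : (b : ℕ) ≠ a := fun hba => hb (Fin.ext hba)
    simp [this]
  · simp

lemma dot_chain {ℓ : ℕ} (j : ℕ) (h : j + 1 < ℓ) (μ : Fin ℓ → ℚ) :
    dotHom (chainRoot ℓ j) μ = μ ⟨j, by omega⟩ - μ ⟨j + 1, h⟩ := by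
  rw [dotHom_apply]
  have e : ∀ i : Fin ℓ, chainRoot ℓ j i * μ i
      = (if (i:ℕ) = j then μ i else 0) - (if (i:ℕ) = j+1 then μ i else 0) := by
    intro i; simp only [chainRoot]; split_ifs <;> ring
  rw [Finset.sum_congr rfl fun i _ => e i, Finset.sum_sub_distrib,
    sum_if_eq μ j (by omega), sum_if_eq μ (j+1) h]

lemma dot_fork {ℓ : ℕ} (h : 2 ≤ ℓ) (μ : Fin ℓ → ℚ) :
    dotHom (forkRoot ℓ) μ = μ ⟨ℓ-2, by omega⟩ + μ ⟨ℓ-1, by omega⟩ := by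
  rw [dotHom_apply]
  have e : ∀ i : Fin ℓ, forkRoot ℓ i * μ i
      = (if (i:ℕ) = ℓ-2 then μ i else 0) + (if (i:ℕ) = ℓ-1 then μ i else 0) := by
    intro i; simp only [forkRoot]; split_ifs <;> ring
  rw [Finset.sum_congr rfl fun i _ => e i, Finset.sum_add_distrib,
    sum_if_eq μ (ℓ-2) (by omega), sum_if_eq μ (ℓ-1) (by omega)]

lemma dot_omega {ℓ : ℕ} (h : 1 ≤ ℓ) (μ : Fin ℓ → ℚ) :
    dotHom (omegaD ℓ) μ = (∑ i, μ i) / 2 - μ ⟨ℓ-1, by omega⟩ := by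
  rw [dotHom_apply]
  have e : ∀ i : Fin ℓ, omegaD ℓ i * μ i
      = μ i / 2 - (if (i:ℕ) = ℓ-1 then μ i else 0) := by
    intro i; simp only [omegaD]; split_ifs <;> ring
  rw [Finset.sum_congr rfl fun i _ => e i, Finset.sum_sub_distrib,
    sum_if_eq μ (ℓ-1) (by omega), ← Finset.sum_div]

lemma sum_chain {ℓ : ℕ} (j : ℕ) (h : j + 1 < ℓ) : ∑ i, chainRoot ℓ j i = 0 := by
  have e : ∀ i : Fin ℓ, chainRoot ℓ j i
      = (if (i:ℕ)=j then (1:ℚ) else 0) - (if (i:ℕ)=j+1 then (1:ℚ) else 0) := fun i => rfl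
  rw [Finset.sum_congr rfl fun i _ => e i, Finset.sum_sub_distrib,
    sum_if_eq (fun _ => (1:ℚ)) j (by omega), sum_if_eq (fun _ => (1:ℚ)) (j+1) h]
  ring

lemma sum_fork {ℓ : ℕ} (h : 2 ≤ ℓ) : ∑ i, forkRoot ℓ i = 2 := by
  have e : ∀ i : Fin ℓ, forkRoot ℓ i
      = (if (i:ℕ)=ℓ-2 then (1:ℚ) else 0) + (if (i:ℕ)=ℓ-1 then (1:ℚ) else 0) := fun i => rfl
  rw [Finset.sum_congr rfl fun i _ => e i, Finset.sum_add_distrib,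
    sum_if_eq (fun _ => (1:ℚ)) (ℓ-2) (by omega), sum_if_eq (fun _ => (1:ℚ)) (ℓ-1) (by omega)]
  ring

end HalfSpinAux
namespace HalfSpinAux

lemma lamD_apply {ℓ k : ℕ} (hk : ℓ = 2*k) (hℓ : 4 ≤ ℓ) (i : Fin ℓ) :
    lamD ℓ i = if Even (i:ℕ) ∨ (i:ℕ) = ℓ-1 then 1/2 else -(1/2) := by
  have hi : (i:ℕ) < ℓ := i.2
  have hmod : ℓ % 2 = 0 := by omega
  have expand : lamD ℓ i = (1/2) *
      ((∑ j ∈ (Finset.range (ℓ-3)).filter Even,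
        ((if (i:ℕ) = j then (1:ℚ) else 0) - (if (i:ℕ) = j+1 then (1:ℚ) else 0)))
      + ((if (i:ℕ) = ℓ-2 then (1:ℚ) else 0) + (if (i:ℕ) = ℓ-1 then (1:ℚ) else 0))) := by
    simp [lamD, chainRoot, forkRoot, Finset.sum_apply, smul_eq_mul]
  have S1 : (∑ j ∈ (Finset.range (ℓ-3)).filter Even, if (i:ℕ) = j then (1:ℚ) else 0)
      = if (i:ℕ) ∈ (Finset.range (ℓ-3)).filter Even then 1 else 0 :=
    Finset.sum_ite_eq _ _ _
  have S2 : (∑ j ∈ (Finset.range (ℓ-3)).filter Even, if (i:ℕ) = j + 1 then (1:ℚ) else 0)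
      = if (i:ℕ) ≠ 0 ∧ ((i:ℕ) - 1) ∈ (Finset.range (ℓ-3)).filter Even then 1 else 0 := by
    rcases Nat.eq_zero_or_pos (i:ℕ) with h0 | h0
    · simp [h0]
    · obtain ⟨m, hm⟩ : ∃ m, (i:ℕ) = m + 1 := ⟨(i:ℕ)-1, by omega⟩
      rw [hm]
      simp only [add_left_inj]
      rw [Finset.sum_ite_eq]
      simp
  rw [expand, Finset.sum_sub_distrib, S1, S2]
  simp only [Finset.mem_filter, Finset.mem_range, Nat.even_iff]
  split_ifs <;> (first | omega | norm_num)

end HalfSpinAux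
namespace HalfSpinAux

def eVec (ℓ a : ℕ) : Fin ℓ → ℚ := fun i => if (i:ℕ) = a then 1 else 0

lemma chainRoot_eq (ℓ j : ℕ) : chainRoot ℓ j = eVec ℓ j - eVec ℓ (j+1) := rfl
lemma forkRoot_eq (ℓ : ℕ) : forkRoot ℓ = eVec ℓ (ℓ-2) + eVec ℓ (ℓ-1) := rfl

lemma chain_mem {ℓ : ℕ} (j : ℕ) (h : j + 1 < ℓ) : chainRoot ℓ j ∈ rootLatticeD ℓ := by
  apply AddSubgroup.subset_closure
  exact ⟨⟨j, by omega⟩, by simp [rootD, h]⟩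

lemma fork_mem {ℓ : ℕ} (h : 2 ≤ ℓ) : forkRoot ℓ ∈ rootLatticeD ℓ := by
  apply AddSubgroup.subset_closure
  refine ⟨⟨ℓ-1, by omega⟩, ?_⟩
  have h' : ¬ ((ℓ-1) + 1 < ℓ) := by omega
  simp [rootD, h']

lemma diff_mem_aux {ℓ : ℕ} : ∀ d a, a + d < ℓ → eVec ℓ a - eVec ℓ (a+d) ∈ rootLatticeD ℓ := by
  intro d
  induction d with
  | zero => intro a _; simpa using zero_mem (rootLatticeD ℓ)
  | succ d ih =>
      intro a h
      have key : eVec ℓ a - eVec ℓ (a+(d+1))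
          = (eVec ℓ a - eVec ℓ (a+d)) + chainRoot ℓ (a+d) := by
        rw [chainRoot_eq]
        have e : a + (d+1) = (a+d)+1 := by omega
        rw [e]; abel
      rw [key]
      exact add_mem (ih a (by omega)) (chain_mem _ (by omega))

lemma diff_mem {ℓ : ℕ} (a b : ℕ) (ha : a < ℓ) (hb : b < ℓ) :
    eVec ℓ a - eVec ℓ b ∈ rootLatticeD ℓ := by
  rcases le_total a b with h | h
  · have := diff_mem_aux (ℓ := ℓ) (b - a) a (by omega)
    rwa [show a + (b - a) = b by omega] at this
  · have := diff_mem_aux (ℓ := ℓ) (a - b) b (by omega)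
    rw [show b + (a - b) = a by omega] at this
    simpa [neg_sub] using neg_mem this

lemma sum2_mem {ℓ : ℕ} (hℓ : 2 ≤ ℓ) (a b : ℕ) (ha : a < ℓ) (hb : b < ℓ) :
    eVec ℓ a + eVec ℓ b ∈ rootLatticeD ℓ := by
  have key : eVec ℓ a + eVec ℓ b
      = (eVec ℓ a - eVec ℓ (ℓ-2)) + ((eVec ℓ b - eVec ℓ (ℓ-1)) + forkRoot ℓ) := by
    rw [forkRoot_eq]; abel
  rw [key]
  exact add_mem (diff_mem _ _ ha (by omega))
    (add_mem (diff_mem _ _ hb (by omega)) (fork_mem hℓ))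

lemma sum_if_eq' {ℓ : ℕ} (f : Fin ℓ → ℚ) (j : Fin ℓ) :
    (∑ i : Fin ℓ, if (j:ℕ) = (i:ℕ) then f i else 0) = f j := by
  rw [Finset.sum_eq_single j]
  · simp
  · intro b _ hb
    have : (j : ℕ) ≠ (b : ℕ) := fun hba => hb (Fin.ext hba).symm
    simp [this]
  · simp

lemma int_even_mem {ℓ : ℕ} (hℓ : 2 ≤ ℓ) (x : Fin ℓ → ℚ) (n : Fin ℓ → ℤ)
    (hx : ∀ i, x i = n i) (m : ℤ) (hs : ∑ i, x i = 2 * m) :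
    x ∈ rootLatticeD ℓ := by
  have h0 : (0:ℕ) < ℓ := by omega
  have hsum : (∑ i : Fin ℓ, ((n i : ℚ))) = 2 * m := by
    rw [← hs]; exact Finset.sum_congr rfl fun i _ => (hx i).symm
  have key : x = (∑ i : Fin ℓ, n i • (eVec ℓ (i:ℕ) - eVec ℓ 0)) + m • (eVec ℓ 0 + eVec ℓ 0) := by
    funext j
    simp only [Pi.add_apply, Finset.sum_apply, Pi.smul_apply, Pi.sub_apply,
      zsmul_eq_mul, Pi.mul_apply, Pi.intCast_apply, eVec, hx j]
    have e1 : ∀ i : Fin ℓ, (n i : ℚ) *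
        ((if (j:ℕ) = (i:ℕ) then (1:ℚ) else 0) - (if (j:ℕ) = 0 then (1:ℚ) else 0))
        = (if (j:ℕ) = (i:ℕ) then (n i : ℚ) else 0)
          - (if (j:ℕ) = 0 then (1:ℚ) else 0) * (n i : ℚ) := by
      intro i; split_ifs <;> ring
    rw [Finset.sum_congr rfl fun i _ => e1 i, Finset.sum_sub_distrib,
      sum_if_eq' (fun i => (n i : ℚ)) j, ← Finset.mul_sum, hsum]
    split_ifs <;> ring
  rw [key]
  exact add_mem (sum_mem fun i _ => zsmul_mem (diff_mem _ _ i.2 h0) _)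
    (zsmul_mem (sum2_mem hℓ 0 0 h0 h0) _)

end HalfSpinAux
namespace HalfSpinAux

lemma dot_int {ℓ : ℕ} {a b : Fin ℓ → ℚ} (ha : ∀ i, ∃ n : ℤ, a i = n)
    (hb : ∀ i, ∃ n : ℤ, b i = n) : ∃ n : ℤ, dotHom a b = n := by
  choose na hna using ha
  choose nb hnb using hb
  refine ⟨∑ i, na i * nb i, ?_⟩
  rw [dotHom_apply]
  push_cast
  exact Finset.sum_congr rfl fun i _ => by rw [hna i, hnb i]

lemma root_int {ℓ : ℕ} (j : Fin ℓ) (i : Fin ℓ) : ∃ n : ℤ, rootD ℓ j i = n := by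
  unfold rootD chainRoot forkRoot
  split
  · dsimp only; split_ifs
    exacts [⟨0, by norm_num⟩, ⟨1, by norm_num⟩, ⟨-1, by norm_num⟩, ⟨0, by norm_num⟩]
  · dsimp only; split_ifs
    exacts [⟨2, by norm_num⟩, ⟨1, by norm_num⟩, ⟨1, by norm_num⟩, ⟨0, by norm_num⟩]

lemma lam_int {ℓ k : ℕ} (hk : ℓ = 2*k) (hℓ : 4 ≤ ℓ) (i : Fin ℓ) :
    ∃ q : ℚ, lamD ℓ i = q ∧ (q = 1/2 ∨ q = -(1/2)) := by
  rw [lamD_apply hk hℓ]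
  split_ifs
  · exact ⟨_, rfl, Or.inl rfl⟩
  · exact ⟨_, rfl, Or.inr rfl⟩

lemma mem_weight_iff {ℓ : ℕ} (μ : Fin ℓ → ℚ) :
    μ ∈ weightLatticeD ℓ ↔ ∀ j : Fin ℓ, ∃ n : ℤ, dotHom (rootD ℓ j) μ = n := by
  simp [weightLatticeD, AddSubgroup.mem_iInf, AddSubgroup.mem_comap, mem_zmul]

lemma mem_X_iff {ℓ : ℕ} (μ : Fin ℓ → ℚ) :
    μ ∈ halfSpinCharLattice ℓ ↔
      (∀ j : Fin ℓ, ∃ n : ℤ, dotHom (rootD ℓ j) μ = n) ∧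
      ∃ n : ℤ, dotHom (omegaD ℓ) μ = n := by
  rw [halfSpinCharLattice, AddSubgroup.mem_inf, mem_weight_iff, AddSubgroup.mem_comap, mem_zmul]

end HalfSpinAux
namespace HalfSpinAux
set_option maxHeartbeats 4000000 in
lemma forward_mem {ℓ k : ℕ} (hk : ℓ = 2 * k) (hℓ : 4 ≤ ℓ) (μ : Fin ℓ → ℚ)
    (sum_lam : ∑ i, lamD ℓ i = 1)
    (hμ : μ ∈ halfSpinCharLattice ℓ) :
    μ ∈ rootLatticeD ℓ ⊔ AddSubgroup.closure {lamD ℓ} := by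
  have h2 : 2 ≤ ℓ := by omega
  have hmod : ℓ % 2 = 0 := by omega
  have lam_ap := lamD_apply hk hℓ
  obtain ⟨hP, w, hw⟩ := (mem_X_iff μ).1 hμ
  rw [dot_omega (by omega)] at hw
  have hchain : ∀ a, ∀ (h : a + 1 < ℓ),
      ∃ n : ℤ, μ ⟨a, by omega⟩ - μ ⟨a+1, h⟩ = n := by
    intro a h
    obtain ⟨n, hn⟩ := hP ⟨a, by omega⟩
    have hr : rootD ℓ ⟨a, by omega⟩ = chainRoot ℓ a := if_pos h
    rw [hr, dot_chain a h] at hn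
    exact ⟨n, hn⟩
  have hfork : ∃ n : ℤ, μ ⟨ℓ-2, by omega⟩ + μ ⟨ℓ-1, by omega⟩ = n := by
    obtain ⟨n, hn⟩ := hP ⟨ℓ-1, by omega⟩
    have hr : rootD ℓ ⟨ℓ-1, by omega⟩ = forkRoot ℓ := if_neg (by simp only [Fin.val_mk]; omega)
    rw [hr, dot_fork h2] at hn
    exact ⟨n, hn⟩
  have hdiff : ∀ i : Fin ℓ, ∃ c : ℤ, μ i = μ ⟨0, by omega⟩ + c := by
    have main : ∀ a, ∀ (h : a < ℓ), ∃ c : ℤ, μ ⟨a, h⟩ = μ ⟨0, by omega⟩ + c := by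
      intro a
      induction a with
      | zero => intro h; exact ⟨0, by norm_num⟩
      | succ a ih =>
        intro h
        obtain ⟨c, hc⟩ := ih (by omega)
        obtain ⟨d, hd⟩ := hchain a h
        exact ⟨c - d, by push_cast; linarith⟩
    intro i
    obtain ⟨c, hc⟩ := main (i:ℕ) i.2
    exact ⟨c, by simpa using hc⟩
  choose c hc using hdiff
  obtain ⟨dl, hdl⟩ := hchain (ℓ-2) (by omega)
  obtain ⟨f, hf⟩ := hfork
  have idx : (⟨ℓ-2+1, by omega⟩ : Fin ℓ) = ⟨ℓ-1, by omega⟩ := Fin.ext (by simp only [Fin.val_mk]; omega)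
  rw [idx] at hdl
  have h2l : 2 * μ ⟨ℓ-1, by omega⟩ = ((f - dl : ℤ) : ℚ) := by push_cast; linarith
  rcases Int.even_or_odd (f - dl) with ⟨s, hs⟩ | ⟨s, hs⟩
  · -- even case: all coordinates integral
    have hμl : μ ⟨ℓ-1, by omega⟩ = (s:ℚ) := by
      have : ((f - dl : ℤ) : ℚ) = ((s + s : ℤ) : ℚ) := by rw [hs]
      push_cast at this; linarith
    have hμ0 : μ ⟨0, by omega⟩ = ((s - c ⟨ℓ-1, by omega⟩ : ℤ) : ℚ) := by
      have := hc ⟨ℓ-1, by omega⟩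
      push_cast; linarith
    have hni : ∀ i, μ i = ((s - c ⟨ℓ-1, by omega⟩ + c i : ℤ) : ℚ) := by
      intro i
      have := hc i
      push_cast at hμ0 ⊢; linarith
    have hsm : ∑ i, μ i = 2 * ((w + s : ℤ) : ℚ) := by push_cast; linarith
    exact AddSubgroup.mem_sup_left
      (int_even_mem h2 μ (fun i => s - c ⟨ℓ-1, by omega⟩ + c i) hni (w+s) hsm)
  · -- odd case: μ - λ has integral coordinates
    have hμl : μ ⟨ℓ-1, by omega⟩ = (s:ℚ) + 1/2 := by
      have : ((f - dl : ℤ) : ℚ) = ((2*s + 1 : ℤ) : ℚ) := by rw [hs]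
      push_cast at this; linarith
    have hμ0 : μ ⟨0, by omega⟩ = ((s - c ⟨ℓ-1, by omega⟩ : ℤ) : ℚ) + 1/2 := by
      have := hc ⟨ℓ-1, by omega⟩
      push_cast; linarith
    have hνi : ∀ i, (μ - lamD ℓ) i =
        ((s - c ⟨ℓ-1, by omega⟩ + c i
          + (if Even (i:ℕ) ∨ (i:ℕ) = ℓ-1 then 0 else 1) : ℤ) : ℚ) := by
      intro i
      have h1 := hc i
      have hlam := lam_ap i
      simp only [Pi.sub_apply]
      by_cases hcond : Even (i:ℕ) ∨ (i:ℕ) = ℓ-1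
      · rw [if_pos hcond] at hlam
        rw [if_pos hcond, hlam]
        push_cast at hμ0 ⊢; linarith
      · rw [if_neg hcond] at hlam
        rw [if_neg hcond, hlam]
        push_cast at hμ0 ⊢; linarith
    have hsν : ∑ i, (μ - lamD ℓ) i = 2 * ((w + s : ℤ) : ℚ) := by
      have : ∑ i, (μ - lamD ℓ) i = (∑ i, μ i) - ∑ i, lamD ℓ i := by
        simp [Finset.sum_sub_distrib]
      rw [this, sum_lam]
      push_cast; linarith
    have hν : (μ - lamD ℓ) ∈ rootLatticeD ℓ := int_even_mem h2 _ _ hνi (w+s) hsν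
    have hdecomp : μ = (μ - lamD ℓ) + lamD ℓ := by ring
    rw [hdecomp]
    exact add_mem (AddSubgroup.mem_sup_left hν)
      (AddSubgroup.mem_sup_right (AddSubgroup.subset_closure rfl))

end HalfSpinAux

open HalfSpinAux in
set_option maxHeartbeats 1000000 in
/-- For `D_ℓ` with `ℓ = 2k` even, `λ = (α₁ + α₃ + ⋯ + α_{ℓ-3} + α_ℓ)/2` pairs
integrally with every simple coroot, with values in `{-1,0,1}`; it is orthogonal
to `ω_{ℓ-1}^∨`; it is not in the root lattice `Q`; and the character lattice `X`
of the half-spin group is generated by `Q` and `λ`. -/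
theorem halfSpin_character_lattice (ℓ k : ℕ) (hk : ℓ = 2 * k) (hℓ : 4 ≤ ℓ) :
    (∀ j : Fin ℓ, ∃ n : ℤ, dotHom (rootD ℓ j) (lamD ℓ) = n ∧ (n = -1 ∨ n = 0 ∨ n = 1)) ∧
    dotHom (omegaD ℓ) (lamD ℓ) = 0 ∧
    lamD ℓ ∉ rootLatticeD ℓ ∧
    halfSpinCharLattice ℓ = rootLatticeD ℓ ⊔ AddSubgroup.closure {lamD ℓ} := by
  have h2 : 2 ≤ ℓ := by omega
  have hmod : ℓ % 2 = 0 := by omega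
  have lam_ap := lamD_apply hk hℓ
  -- Part 1
  have part1 : ∀ j : Fin ℓ, ∃ n : ℤ,
      dotHom (rootD ℓ j) (lamD ℓ) = n ∧ (n = -1 ∨ n = 0 ∨ n = 1) := by
    intro j
    by_cases h : (j:ℕ) + 1 < ℓ
    · have hr : rootD ℓ j = chainRoot ℓ (j:ℕ) := if_pos h
      rw [hr, dot_chain _ h, lam_ap, lam_ap]
      simp only [Nat.even_iff]
      split_ifs
      exacts [⟨0, by norm_num, by norm_num⟩, ⟨1, by norm_num, by norm_num⟩,
        ⟨-1, by norm_num, by norm_num⟩, ⟨0, by norm_num, by norm_num⟩]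
    · have hr : rootD ℓ j = forkRoot ℓ := if_neg h
      rw [hr, dot_fork h2, lam_ap, lam_ap]
      refine ⟨1, ?_, by norm_num⟩
      rw [if_pos (Or.inl (Nat.even_iff.2 (by simp only [Fin.val_mk]; omega))), if_pos (Or.inr (by simp only [Fin.val_mk]))]
      norm_num
  -- sum of λ
  have sum_lam : (∑ i, lamD ℓ i) = 1 := by
    have e : ∀ i : Fin ℓ, lamD ℓ i
        = (1/2) * ((∑ j ∈ (Finset.range (ℓ-3)).filter Even, chainRoot ℓ j i)
            + forkRoot ℓ i) := by
      intro i; simp [lamD, Finset.sum_apply]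
    rw [Finset.sum_congr rfl fun i _ => e i, ← Finset.mul_sum, Finset.sum_add_distrib,
      sum_fork h2, Finset.sum_comm]
    rw [Finset.sum_congr rfl
      (fun j hj => sum_chain j (by
        simp only [Finset.mem_filter, Finset.mem_range] at hj; omega))]
    simp
  -- Part 2
  have part2 : dotHom (omegaD ℓ) (lamD ℓ) = 0 := by
    rw [dot_omega (by omega), sum_lam, lam_ap, if_pos (Or.inr (by simp only [Fin.val_mk]))]
    norm_num
  -- Part 3
  have part3 : lamD ℓ ∉ rootLatticeD ℓ := by
    intro hmem
    have hle : rootLatticeD ℓ ≤ AddSubgroup.comap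
        (Pi.evalAddMonoidHom (fun _ : Fin ℓ => ℚ) ⟨0, by omega⟩)
        (AddSubgroup.zmultiples (1:ℚ)) := by
      rw [rootLatticeD, AddSubgroup.closure_le]
      rintro y ⟨j, rfl⟩
      simp only [SetLike.mem_coe, AddSubgroup.mem_comap, Pi.evalAddMonoidHom_apply]
      exact (mem_zmul _).2 (root_int j ⟨0, by omega⟩)
    obtain ⟨n, hn⟩ := (mem_zmul _).1 (hle hmem)
    rw [Pi.evalAddMonoidHom_apply, lam_ap, if_pos (Or.inl (by simp))] at hn
    have : ((2*n : ℤ) : ℚ) = 1 := by push_cast; linarith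
    have : (2*n : ℤ) = 1 := by exact_mod_cast this
    omega
  -- X contains Q and λ
  have lamX : lamD ℓ ∈ halfSpinCharLattice ℓ := by
    rw [mem_X_iff]
    exact ⟨fun j => (part1 j).imp fun n hn => hn.1, ⟨0, by rw [part2]; norm_num⟩⟩
  have QleX : rootLatticeD ℓ ≤ halfSpinCharLattice ℓ := by
    rw [rootLatticeD, AddSubgroup.closure_le]
    rintro y ⟨j, rfl⟩
    rw [SetLike.mem_coe, mem_X_iff]
    refine ⟨fun m => dot_int (root_int m) (root_int j), ?_⟩
    rw [dot_omega (by omega)]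
    by_cases h : (j:ℕ) + 1 < ℓ
    · have hr : rootD ℓ j = chainRoot ℓ (j:ℕ) := if_pos h
      rw [hr, sum_chain _ h]
      refine ⟨if ℓ - 1 = (j:ℕ) + 1 then 1 else 0, ?_⟩
      simp only [chainRoot]
      split_ifs <;> first | omega | norm_num
    · have hr : rootD ℓ j = forkRoot ℓ := if_neg h
      rw [hr, sum_fork h2]
      refine ⟨0, ?_⟩
      simp only [forkRoot, Fin.val_mk]
      split_ifs <;> first | omega | norm_num
  have lamle : AddSubgroup.closure {lamD ℓ} ≤ halfSpinCharLattice ℓ := by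
    rw [AddSubgroup.closure_le]
    exact Set.singleton_subset_iff.2 lamX
  exact ⟨part1, part2, part3,
    le_antisymm (fun μ hμ => forward_mem hk hℓ μ sum_lam hμ) (sup_le QleX lamle)⟩
end
end

section
/- Let ℓ = 2k ≥ 4 be even. Consider the set K_2 of nonnegative integer tuples (p_0, p_1, ..., p_ℓ) with p_0 + p_1 + 2(p_2 + ... + p_{ℓ-2}) + p_{ℓ-1} + p_ℓ = 2, and the involution σ on K_2 induced by the diagram symmetry swapping p_0 ↔ p_{ℓ-1}, p_1 ↔ p_ℓ, and p_j ↔ p_{ℓ-j} for 2 ≤ j ≤ ℓ-2. Call a labeling even if p_1 + p_3 + p_5 + ... + p_{ℓ-3} + p_ℓ is even. Then the number of σ-orbits consisting of even labelings equals ⌊k/2⌋ + 4. -/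
open scoped BigOperators

/-- The marks of the extended Dynkin diagram of `D_ℓ`: `1` at the four extreme
vertices `0, 1, ℓ-1, ℓ` and `2` at `2, …, ℓ-2`. -/
def markD (ℓ : ℕ) (j : ℕ) : ℕ :=
  if j = 0 ∨ j = 1 ∨ j = ℓ - 1 ∨ j = ℓ then 1 else 2

/-- A Kac 2-labeling of the extended Dynkin diagram of `D_ℓ`, encoded as a
function `ℕ → ℕ` supported on the vertices `0, …, ℓ` with `∑ m_j p_j = 2`. -/
def IsKacTwoD (ℓ : ℕ) (p : ℕ → ℕ) : Prop :=
  (∀ j, ℓ < j → p j = 0) ∧ ∑ j ∈ Finset.range (ℓ + 1), markD ℓ j * p j = 2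

/-- The diagram involution `σ` of the extended Dynkin diagram of `D_ℓ`
(vertical-axis reflection): `0 ↔ ℓ-1`, `1 ↔ ℓ`, `j ↔ ℓ-j` for `2 ≤ j ≤ ℓ-2`. -/
def sigmaIdx (ℓ : ℕ) (j : ℕ) : ℕ :=
  if j = 0 then ℓ - 1 else if j = 1 then ℓ
  else if j = ℓ - 1 then 0 else if j = ℓ then 1
  else if j ≤ ℓ then ℓ - j else j

/-- The sum of the labels over the black vertices `1, 3, 5, …, ℓ-3, ℓ`. -/
def blackSum (ℓ : ℕ) (p : ℕ → ℕ) : ℕ :=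
  (∑ j ∈ (Finset.range (ℓ - 2)).filter (fun j => Odd j), p j) + p ℓ

def dblD (i j : ℕ) : ℕ := if j = i then 2 else 0
def sglD (i j : ℕ) : ℕ := if j = i then 1 else 0
def prD (a b j : ℕ) : ℕ := if j = a then 1 else if j = b then 1 else 0
def idxD (ℓ : ℕ) (p : ℕ → ℕ) : ℕ := ∑ j ∈ Finset.range (ℓ + 1), j * p j
def phiD (ℓ : ℕ) (p : ℕ → ℕ) : ℕ :=
  if p 0 = 2 ∨ p (ℓ - 1) = 2 then 0
  else if p 1 = 2 ∨ p ℓ = 2 then 1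
  else if p 0 = 1 then 2
  else if p 1 = 1 then 3
  else 3 + min (idxD ℓ p) (ℓ - idxD ℓ p) / 2

lemma sum_two {s : Finset ℕ} {f : ℕ → ℕ} (h : ∑ j ∈ s, f j = 2) :
    (∃ a ∈ s, f a = 2 ∧ ∀ b ∈ s, b ≠ a → f b = 0) ∨
    ∃ a ∈ s, ∃ b ∈ s, a ≠ b ∧ f a = 1 ∧ f b = 1 ∧ ∀ c ∈ s, c ≠ a → c ≠ b → f c = 0 := by
  classical
  set t := s.filter (fun j => f j ≠ 0) with ht
  have hsub : t ⊆ s := Finset.filter_subset _ _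
  have hsum : ∑ j ∈ t, f j = 2 := by rw [ht, Finset.sum_filter_ne_zero]; exact h
  have hcard : t.card ≤ 2 := by
    have h1 : t.card * 1 ≤ ∑ j ∈ t, f j := by
      have := Finset.card_nsmul_le_sum t f 1 (fun x hx => by
        have := (Finset.mem_filter.mp hx).2; omega)
      simpa using this
    omega
  have hne : t.card ≠ 0 := by
    intro h0
    rw [Finset.card_eq_zero.mp h0] at hsum
    simp at hsum
  have hz : ∀ c ∈ s, c ∉ t → f c = 0 := by
    intro c hc hct
    by_contra hfc
    exact hct (Finset.mem_filter.mpr ⟨hc, hfc⟩)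
  rcases Nat.lt_or_ge t.card 2 with hlt | hge
  · -- card = 1
    have h1 : t.card = 1 := by omega
    obtain ⟨a, hta⟩ := Finset.card_eq_one.mp h1
    have hat : a ∈ t := by rw [hta]; exact Finset.mem_singleton_self a
    left
    refine ⟨a, hsub hat, ?_, ?_⟩
    · rw [hta, Finset.sum_singleton] at hsum; exact hsum
    · intro b hb hba
      refine hz b hb ?_
      rw [hta]; simp [hba]
  · have h1 : t.card = 2 := by omega
    obtain ⟨a, b, hab, hset⟩ := Finset.card_eq_two.mp h1
    have hat : a ∈ t := by rw [hset]; simp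
    have hbt : b ∈ t := by rw [hset]; simp
    have hfa : f a ≠ 0 := (Finset.mem_filter.mp hat).2
    have hfb : f b ≠ 0 := (Finset.mem_filter.mp hbt).2
    have hsum2 : f a + f b = 2 := by
      rw [hset, Finset.sum_pair hab] at hsum; exact hsum
    right
    refine ⟨a, hsub hat, b, hsub hbt, hab, by omega, by omega, ?_⟩
    intro c hc hca hcb
    refine hz c hc ?_
    rw [hset]; simp [hca, hcb]

section Sigma
variable (ℓ : ℕ)

lemma sigma_zero : sigmaIdx ℓ 0 = ℓ - 1 := by simp [sigmaIdx]

lemma sigma_one (hl4 : 4 ≤ ℓ) : sigmaIdx ℓ 1 = ℓ := by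
  unfold sigmaIdx; split_ifs <;> first | contradiction | omega

lemma sigma_lm1 (hl4 : 4 ≤ ℓ) : sigmaIdx ℓ (ℓ - 1) = 0 := by
  unfold sigmaIdx; split_ifs <;> first | contradiction | omega

lemma sigma_top (hl4 : 4 ≤ ℓ) : sigmaIdx ℓ ℓ = 1 := by
  unfold sigmaIdx; split_ifs <;> first | contradiction | omega

lemma sigma_mid (hl4 : 4 ≤ ℓ) (j : ℕ) (h1 : 2 ≤ j) (h2 : j ≤ ℓ - 2) :
    sigmaIdx ℓ j = ℓ - j := by
  unfold sigmaIdx; split_ifs <;> first | contradiction | omega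

lemma sigma_big (hl4 : 4 ≤ ℓ) (j : ℕ) (h : ℓ < j) : sigmaIdx ℓ j = j := by
  unfold sigmaIdx; split_ifs <;> first | contradiction | omega

lemma sigma_invol (hl4 : 4 ≤ ℓ) (j : ℕ) : sigmaIdx ℓ (sigmaIdx ℓ j) = j := by
  by_cases h0 : j = 0
  · rw [h0, sigma_zero, sigma_lm1 ℓ hl4]
  by_cases h1 : j = 1
  · rw [h1, sigma_one ℓ hl4, sigma_top ℓ hl4]
  by_cases hm : j = ℓ - 1
  · rw [hm, sigma_lm1 ℓ hl4, sigma_zero]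
  by_cases hl : j = ℓ
  · rw [hl, sigma_top ℓ hl4, sigma_one ℓ hl4]
  by_cases hbig : ℓ < j
  · rw [sigma_big ℓ hl4 j hbig, sigma_big ℓ hl4 j hbig]
  · have hj2 : 2 ≤ j := by omega
    have hju : j ≤ ℓ - 2 := by omega
    rw [sigma_mid ℓ hl4 j hj2 hju, sigma_mid ℓ hl4 (ℓ - j) (by omega) (by omega)]
    omega

lemma sigma_eq_iff (hl4 : 4 ≤ ℓ) (j i : ℕ) : sigmaIdx ℓ j = i ↔ j = sigmaIdx ℓ i := by
  constructor
  · intro h; rw [← h, sigma_invol ℓ hl4]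
  · intro h; rw [h, sigma_invol ℓ hl4]

lemma sglD_comp (hl4 : 4 ≤ ℓ) (i : ℕ) :
    sglD i ∘ sigmaIdx ℓ = sglD (sigmaIdx ℓ i) := by
  funext j
  simp only [Function.comp_apply, sglD]
  exact if_congr (sigma_eq_iff ℓ hl4 j i) rfl rfl

lemma dblD_comp (hl4 : 4 ≤ ℓ) (i : ℕ) :
    dblD i ∘ sigmaIdx ℓ = dblD (sigmaIdx ℓ i) := by
  funext j
  simp only [Function.comp_apply, dblD]
  exact if_congr (sigma_eq_iff ℓ hl4 j i) rfl rfl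

lemma prD_comp (hl4 : 4 ≤ ℓ) (a b : ℕ) :
    prD a b ∘ sigmaIdx ℓ = prD (sigmaIdx ℓ a) (sigmaIdx ℓ b) := by
  funext j
  simp only [Function.comp_apply, prD]
  exact if_congr (sigma_eq_iff ℓ hl4 j a) rfl
    (if_congr (sigma_eq_iff ℓ hl4 j b) rfl rfl)

lemma prD_comm (a b : ℕ) (hab : a ≠ b) : prD a b = prD b a := by
  funext j; unfold prD; split_ifs <;> first | contradiction | omega

end Sigma

section Evals
variable (ℓ : ℕ)

lemma mem_F (j : ℕ) :
    j ∈ (Finset.range (ℓ - 2)).filter (fun j => Odd j) ↔ j < ℓ - 2 ∧ j % 2 = 1 := by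
  simp [Finset.mem_filter, Finset.mem_range, Nat.odd_iff]

lemma blackSum_sgl (i : ℕ) :
    blackSum ℓ (sglD i) =
      (if i ∈ (Finset.range (ℓ - 2)).filter (fun j => Odd j) then 1 else 0)
        + (if ℓ = i then 1 else 0) := by
  simp only [blackSum, sglD]
  rw [Finset.sum_ite_eq']

lemma blackSum_dbl (i : ℕ) :
    blackSum ℓ (dblD i) =
      (if i ∈ (Finset.range (ℓ - 2)).filter (fun j => Odd j) then 2 else 0)
        + (if ℓ = i then 2 else 0) := by
  simp only [blackSum, dblD]
  rw [Finset.sum_ite_eq']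

lemma prD_split (a b : ℕ) (hab : a ≠ b) (j : ℕ) : prD a b j = sglD a j + sglD b j := by
  unfold prD sglD; split_ifs <;> first | contradiction | omega

lemma blackSum_pr (a b : ℕ) (hab : a ≠ b) :
    blackSum ℓ (prD a b) =
      ((if a ∈ (Finset.range (ℓ - 2)).filter (fun j => Odd j) then 1 else 0)
        + (if b ∈ (Finset.range (ℓ - 2)).filter (fun j => Odd j) then 1 else 0))
      + ((if ℓ = a then 1 else 0) + (if ℓ = b then 1 else 0)) := by
  unfold blackSum
  simp only [prD_split a b hab]
  rw [Finset.sum_add_distrib]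
  simp only [sglD]
  rw [Finset.sum_ite_eq', Finset.sum_ite_eq']

lemma kac_sum_sgl (i : ℕ) (hi : i ≤ ℓ) :
    ∑ j ∈ Finset.range (ℓ + 1), markD ℓ j * sglD i j = markD ℓ i := by
  simp only [sglD, mul_ite, mul_one, mul_zero]
  rw [Finset.sum_ite_eq', if_pos (Finset.mem_range.mpr (by omega))]

lemma kac_sgl (hl4 : 4 ≤ ℓ) (i : ℕ) (hi1 : 2 ≤ i) (hi2 : i ≤ ℓ - 2) :
    IsKacTwoD ℓ (sglD i) := by
  constructor
  · intro j hj; unfold sglD; split_ifs <;> first | contradiction | omega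
  · rw [kac_sum_sgl ℓ i (by omega)]
    unfold markD; split_ifs <;> first | contradiction | omega

lemma kac_dbl (hl4 : 4 ≤ ℓ) (i : ℕ) (hext : i = 0 ∨ i = 1 ∨ i = ℓ - 1 ∨ i = ℓ) :
    IsKacTwoD ℓ (dblD i) := by
  constructor
  · intro j hj; unfold dblD; split_ifs <;> first | contradiction | omega
  · simp only [dblD, mul_ite, mul_zero]
    rw [Finset.sum_ite_eq', if_pos (Finset.mem_range.mpr (by omega))]
    unfold markD; rw [if_pos hext]

lemma kac_pr (hl4 : 4 ≤ ℓ) (a b : ℕ)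
    (ha : a = 0 ∨ a = 1 ∨ a = ℓ - 1 ∨ a = ℓ) (hb : b = 0 ∨ b = 1 ∨ b = ℓ - 1 ∨ b = ℓ)
    (hab : a ≠ b) : IsKacTwoD ℓ (prD a b) := by
  constructor
  · intro j hj; unfold prD; split_ifs <;> first | contradiction | omega
  · simp only [prD_split a b hab, mul_add]
    rw [Finset.sum_add_distrib, kac_sum_sgl ℓ a (by omega), kac_sum_sgl ℓ b (by omega)]
    unfold markD; rw [if_pos ha, if_pos hb]

lemma idxD_sgl (i : ℕ) (hi : i ≤ ℓ) : idxD ℓ (sglD i) = i := by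
  unfold idxD
  simp only [sglD, mul_ite, mul_one, mul_zero]
  rw [Finset.sum_ite_eq', if_pos (Finset.mem_range.mpr (by omega))]

lemma phiD_dbl0 (hl4 : 4 ≤ ℓ) : phiD ℓ (dblD 0) = 0 := by
  have h0 : dblD 0 0 = 2 := by unfold dblD; split_ifs <;> first | contradiction | omega
  unfold phiD
  rw [if_pos (Or.inl h0)]

lemma phiD_dbl_lm1 (hl4 : 4 ≤ ℓ) : phiD ℓ (dblD (ℓ - 1)) = 0 := by
  have h0 : dblD (ℓ - 1) (ℓ - 1) = 2 := by
    unfold dblD; split_ifs <;> first | contradiction | omega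
  unfold phiD
  rw [if_pos (Or.inr h0)]

lemma phiD_dbl1 (hl4 : 4 ≤ ℓ) : phiD ℓ (dblD 1) = 1 := by
  have h0 : dblD 1 0 = 0 := by unfold dblD; split_ifs <;> first | contradiction | omega
  have hm : dblD 1 (ℓ - 1) = 0 := by unfold dblD; split_ifs <;> first | contradiction | omega
  have h1 : dblD 1 1 = 2 := by unfold dblD; split_ifs <;> first | contradiction | omega
  unfold phiD
  rw [h0, hm, h1]
  norm_num

lemma phiD_dbl_top (hl4 : 4 ≤ ℓ) : phiD ℓ (dblD ℓ) = 1 := by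
  have h0 : dblD ℓ 0 = 0 := by unfold dblD; split_ifs <;> first | contradiction | omega
  have hm : dblD ℓ (ℓ - 1) = 0 := by unfold dblD; split_ifs <;> first | contradiction | omega
  have hl : dblD ℓ ℓ = 2 := by unfold dblD; split_ifs <;> first | contradiction | omega
  unfold phiD
  rw [h0, hm, hl]
  norm_num

lemma phiD_pr0 (hl4 : 4 ≤ ℓ) : phiD ℓ (prD 0 (ℓ - 1)) = 2 := by
  have h0 : prD 0 (ℓ - 1) 0 = 1 := by unfold prD; split_ifs <;> first | contradiction | omega
  have hm : prD 0 (ℓ - 1) (ℓ - 1) = 1 := by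
    unfold prD; split_ifs <;> first | contradiction | omega
  have h1 : prD 0 (ℓ - 1) 1 = 0 := by unfold prD; split_ifs <;> first | contradiction | omega
  have hl : prD 0 (ℓ - 1) ℓ = 0 := by unfold prD; split_ifs <;> first | contradiction | omega
  unfold phiD
  rw [h0, hm, h1, hl]
  norm_num

lemma phiD_pr1 (hl4 : 4 ≤ ℓ) : phiD ℓ (prD 1 ℓ) = 3 := by
  have h0 : prD 1 ℓ 0 = 0 := by unfold prD; split_ifs <;> first | contradiction | omega
  have hm : prD 1 ℓ (ℓ - 1) = 0 := by unfold prD; split_ifs <;> first | contradiction | omega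
  have h1 : prD 1 ℓ 1 = 1 := by unfold prD; split_ifs <;> first | contradiction | omega
  have hl : prD 1 ℓ ℓ = 1 := by unfold prD; split_ifs <;> first | contradiction | omega
  unfold phiD
  rw [h0, hm, h1, hl]
  norm_num

lemma phiD_sgl (k i : ℕ) (hk : ℓ = 2 * k) (hk2 : 2 ≤ k) (hi1 : 1 ≤ i) (hi2 : i ≤ k - 1) :
    phiD ℓ (sglD (2 * i)) = 3 + min i (k - i) := by
  have h0 : sglD (2 * i) 0 = 0 := by unfold sglD; split_ifs <;> first | contradiction | omega
  have hm : sglD (2 * i) (ℓ - 1) = 0 := by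
    unfold sglD; split_ifs <;> first | contradiction | omega
  have h1 : sglD (2 * i) 1 = 0 := by unfold sglD; split_ifs <;> first | contradiction | omega
  have hl : sglD (2 * i) ℓ = 0 := by unfold sglD; split_ifs <;> first | contradiction | omega
  have hidx : idxD ℓ (sglD (2 * i)) = 2 * i := idxD_sgl ℓ (2 * i) (by omega)
  unfold phiD
  rw [h0, hm, h1, hl, hidx]
  norm_num
  omega

end Evals

lemma classifyD (ℓ k : ℕ) (hk : ℓ = 2 * k) (hk2 : 2 ≤ k) (p : ℕ → ℕ)
    (hp : IsKacTwoD ℓ p) (he : Even (blackSum ℓ p)) :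
    p = dblD 0 ∨ p = dblD 1 ∨ p = dblD (ℓ - 1) ∨ p = dblD ℓ ∨
    p = prD 0 (ℓ - 1) ∨ p = prD 1 ℓ ∨ ∃ i, 1 ≤ i ∧ i ≤ k - 1 ∧ p = sglD (2 * i) := by
  have hl4 : 4 ≤ ℓ := by omega
  obtain ⟨hsupp, hsum⟩ := hp
  have hmark : ∀ j, markD ℓ j ≠ 0 := fun j => by
    unfold markD; split_ifs <;> omega
  rcases sum_two hsum with ⟨a, ha, h2a, hz⟩ | ⟨a, ha, b, hb, hab, h1a, h1b, hz⟩
  · have haℓ : a ≤ ℓ := by have := Finset.mem_range.mp ha; omega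
    have hpz : ∀ b, b ≠ a → p b = 0 := by
      intro b hbna
      by_cases hbl : b ≤ ℓ
      · have h := hz b (Finset.mem_range.mpr (by omega)) hbna
        rcases Nat.mul_eq_zero.mp h with h' | h'
        · exact absurd h' (hmark b)
        · exact h'
      · exact hsupp b (by omega)
    by_cases hm : a = 0 ∨ a = 1 ∨ a = ℓ - 1 ∨ a = ℓ
    · have hma : markD ℓ a = 1 := by unfold markD; rw [if_pos hm]
      rw [hma, one_mul] at h2a
      have hfun : p = dblD a := by
        funext b
        by_cases hbna : b = a
        · subst hbna; unfold dblD; rw [if_pos rfl]; exact h2a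
        · unfold dblD; rw [if_neg hbna]; exact hpz b hbna
      rcases hm with rfl | rfl | rfl | rfl
      · exact Or.inl hfun
      · exact Or.inr (Or.inl hfun)
      · exact Or.inr (Or.inr (Or.inl hfun))
      · exact Or.inr (Or.inr (Or.inr (Or.inl hfun)))
    · have hma : markD ℓ a = 2 := by unfold markD; rw [if_neg hm]
      rw [hma] at h2a
      have hpa : p a = 1 := by omega
      push_neg at hm
      obtain ⟨hm0, hm1, hmL1, hmL⟩ := hm
      have ha2 : 2 ≤ a := by omega
      have haU : a ≤ ℓ - 2 := by omega
      have hfun : p = sglD a := by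
        funext b
        by_cases hbna : b = a
        · subst hbna; unfold sglD; rw [if_pos rfl]; exact hpa
        · unfold sglD; rw [if_neg hbna]; exact hpz b hbna
      have haeven : a % 2 = 0 := by
        by_contra hodd
        rw [hfun, blackSum_sgl, Nat.even_iff] at he
        simp only [mem_F] at he
        split_ifs at he <;> first | contradiction | omega | simp_all
      refine Or.inr (Or.inr (Or.inr (Or.inr (Or.inr (Or.inr
        ⟨a / 2, ?_, ?_, ?_⟩)))))
      · omega
      · omega
      · rw [hfun, show 2 * (a / 2) = a from by omega]
  · have haℓ : a ≤ ℓ := by have := Finset.mem_range.mp ha; omega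
    have hbℓ : b ≤ ℓ := by have := Finset.mem_range.mp hb; omega
    have hpz : ∀ c, c ≠ a → c ≠ b → p c = 0 := by
      intro c hca hcb
      by_cases hcl : c ≤ ℓ
      · have h := hz c (Finset.mem_range.mpr (by omega)) hca hcb
        rcases Nat.mul_eq_zero.mp h with h' | h'
        · exact absurd h' (hmark c)
        · exact h'
      · exact hsupp c (by omega)
    have hma : a = 0 ∨ a = 1 ∨ a = ℓ - 1 ∨ a = ℓ := by
      by_contra hm
      have : markD ℓ a = 2 := by unfold markD; rw [if_neg hm]
      rw [this] at h1a; omega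
    have hmb : b = 0 ∨ b = 1 ∨ b = ℓ - 1 ∨ b = ℓ := by
      by_contra hm
      have : markD ℓ b = 2 := by unfold markD; rw [if_neg hm]
      rw [this] at h1b; omega
    have hpa : p a = 1 := by
      have h := h1a
      rw [show markD ℓ a = 1 by unfold markD; rw [if_pos hma], one_mul] at h
      exact h
    have hpb : p b = 1 := by
      have h := h1b
      rw [show markD ℓ b = 1 by unfold markD; rw [if_pos hmb], one_mul] at h
      exact h
    have hfun : p = prD a b := by
      funext c
      by_cases hca : c = a
      · subst hca; unfold prD; rw [if_pos rfl]; exact hpa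
      · by_cases hcb : c = b
        · subst hcb; unfold prD; rw [if_neg hca, if_pos rfl]; exact hpb
        · unfold prD; rw [if_neg hca, if_neg hcb]; exact hpz c hca hcb
    rw [hfun, blackSum_pr ℓ a b hab, Nat.even_iff] at he
    simp only [mem_F] at he
    rcases hma with rfl | rfl | rfl | rfl <;> rcases hmb with rfl | rfl | rfl | rfl <;>
      first
        | exact Or.inr (Or.inr (Or.inr (Or.inr (Or.inl hfun))))
        | exact Or.inr (Or.inr (Or.inr (Or.inr (Or.inr (Or.inl hfun)))))
        | exact Or.inr (Or.inr (Or.inr (Or.inr (Or.inl (hfun.trans (prD_comm _ _ hab))))))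
        | exact Or.inr (Or.inr (Or.inr (Or.inr (Or.inr (Or.inl
            (hfun.trans (prD_comm _ _ hab)))))))
        | (split_ifs at he <;> first | contradiction | omega | simp_all)

lemma orbit_of_phi_eq (ℓ k : ℕ) (hk : ℓ = 2 * k) (hk2 : 2 ≤ k) (p q : ℕ → ℕ)
    (hp : IsKacTwoD ℓ p) (hep : Even (blackSum ℓ p))
    (hq : IsKacTwoD ℓ q) (heq : Even (blackSum ℓ q))
    (h : phiD ℓ p = phiD ℓ q) :
    p = q ∨ q = p ∘ sigmaIdx ℓ ∨ p = q ∘ sigmaIdx ℓ := by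
  have hl4 : 4 ≤ ℓ := by omega
  have c0 : dblD 0 ∘ sigmaIdx ℓ = dblD (ℓ - 1) := by rw [dblD_comp ℓ hl4, sigma_zero]
  have c0' : dblD (ℓ - 1) ∘ sigmaIdx ℓ = dblD 0 := by rw [dblD_comp ℓ hl4, sigma_lm1 ℓ hl4]
  have c1 : dblD 1 ∘ sigmaIdx ℓ = dblD ℓ := by rw [dblD_comp ℓ hl4, sigma_one ℓ hl4]
  have c1' : dblD ℓ ∘ sigmaIdx ℓ = dblD 1 := by rw [dblD_comp ℓ hl4, sigma_top ℓ hl4]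
  have csgl : ∀ i, 1 ≤ i → i ≤ k - 1 → sglD (2 * i) ∘ sigmaIdx ℓ = sglD (ℓ - 2 * i) := by
    intro i hi1 hi2
    rw [sglD_comp ℓ hl4, sigma_mid ℓ hl4 (2 * i) (by omega) (by omega)]
  have sglsgl : ∀ i i', 1 ≤ i → i ≤ k - 1 → 1 ≤ i' → i' ≤ k - 1 →
      3 + min i (k - i) = 3 + min i' (k - i') →
      sglD (2 * i) = sglD (2 * i') ∨ sglD (2 * i') = sglD (2 * i) ∘ sigmaIdx ℓ ∨
        sglD (2 * i) = sglD (2 * i') ∘ sigmaIdx ℓ := by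
    intro i i' hi1 hi2 hi1' hi2' hmin
    rcases (show i' = i ∨ i' = k - i by omega) with hh | hh
    · subst hh; exact Or.inl rfl
    · subst hh
      right; left
      rw [csgl i hi1 hi2, show ℓ - 2 * i = 2 * (k - i) from by omega]
  rcases classifyD ℓ k hk hk2 p hp hep with h1|h1|h1|h1|h1|h1|⟨i,hi1,hi2,h1⟩ <;>
    rcases classifyD ℓ k hk hk2 q hq heq with hq1|hq1|hq1|hq1|hq1|hq1|⟨i',hi1',hi2',hq1⟩ <;>
    subst h1 <;> subst hq1 <;>
    (try rw [phiD_sgl ℓ k i hk hk2 hi1 hi2] at h) <;>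
    (try rw [phiD_sgl ℓ k i' hk hk2 hi1' hi2'] at h) <;>
    (try simp only [phiD_dbl0 ℓ hl4, phiD_dbl1 ℓ hl4, phiD_dbl_lm1 ℓ hl4,
      phiD_dbl_top ℓ hl4, phiD_pr0 ℓ hl4, phiD_pr1 ℓ hl4] at h) <;>
    first
      | (left; rfl)
      | (right; left; exact c0.symm)
      | (right; left; exact c0'.symm)
      | (right; left; exact c1.symm)
      | (right; left; exact c1'.symm)
      | omega
      | exact sglsgl i i' hi1 hi2 hi1' hi2' h

lemma phiD_comp (ℓ k : ℕ) (hk : ℓ = 2 * k) (hk2 : 2 ≤ k) (p : ℕ → ℕ)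
    (hp : IsKacTwoD ℓ p) (hep : Even (blackSum ℓ p)) :
    phiD ℓ (p ∘ sigmaIdx ℓ) = phiD ℓ p := by
  have hl4 : 4 ≤ ℓ := by omega
  have c0 : dblD 0 ∘ sigmaIdx ℓ = dblD (ℓ - 1) := by rw [dblD_comp ℓ hl4, sigma_zero]
  have c0' : dblD (ℓ - 1) ∘ sigmaIdx ℓ = dblD 0 := by rw [dblD_comp ℓ hl4, sigma_lm1 ℓ hl4]
  have c1 : dblD 1 ∘ sigmaIdx ℓ = dblD ℓ := by rw [dblD_comp ℓ hl4, sigma_one ℓ hl4]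
  have c1' : dblD ℓ ∘ sigmaIdx ℓ = dblD 1 := by rw [dblD_comp ℓ hl4, sigma_top ℓ hl4]
  have c2 : prD 0 (ℓ - 1) ∘ sigmaIdx ℓ = prD 0 (ℓ - 1) := by
    rw [prD_comp ℓ hl4, sigma_zero, sigma_lm1 ℓ hl4, prD_comm _ _ (by omega)]
  have c3 : prD 1 ℓ ∘ sigmaIdx ℓ = prD 1 ℓ := by
    rw [prD_comp ℓ hl4, sigma_one ℓ hl4, sigma_top ℓ hl4, prD_comm _ _ (by omega)]
  have csgl : ∀ i, 1 ≤ i → i ≤ k - 1 → sglD (2 * i) ∘ sigmaIdx ℓ = sglD (ℓ - 2 * i) := by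
    intro i hi1 hi2
    rw [sglD_comp ℓ hl4, sigma_mid ℓ hl4 (2 * i) (by omega) (by omega)]
  rcases classifyD ℓ k hk hk2 p hp hep with h1|h1|h1|h1|h1|h1|⟨i,hi1,hi2,h1⟩
  · rw [h1, c0, phiD_dbl_lm1 ℓ hl4, phiD_dbl0 ℓ hl4]
  · rw [h1, c1, phiD_dbl_top ℓ hl4, phiD_dbl1 ℓ hl4]
  · rw [h1, c0', phiD_dbl0 ℓ hl4, phiD_dbl_lm1 ℓ hl4]
  · rw [h1, c1', phiD_dbl1 ℓ hl4, phiD_dbl_top ℓ hl4]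
  · rw [h1, c2]
  · rw [h1, c3]
  · rw [h1, csgl i hi1 hi2, show ℓ - 2 * i = 2 * (k - i) from by omega,
      phiD_sgl ℓ k (k - i) hk hk2 (by omega) (by omega), phiD_sgl ℓ k i hk hk2 hi1 hi2]
    omega

lemma phiD_bound (ℓ k : ℕ) (hk : ℓ = 2 * k) (hk2 : 2 ≤ k) (p : ℕ → ℕ)
    (hp : IsKacTwoD ℓ p) (hep : Even (blackSum ℓ p)) : phiD ℓ p < k / 2 + 4 := by
  have hl4 : 4 ≤ ℓ := by omega
  rcases classifyD ℓ k hk hk2 p hp hep with h1|h1|h1|h1|h1|h1|⟨i,hi1,hi2,h1⟩ <;> subst h1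
  · rw [phiD_dbl0 ℓ hl4]; omega
  · rw [phiD_dbl1 ℓ hl4]; omega
  · rw [phiD_dbl_lm1 ℓ hl4]; omega
  · rw [phiD_dbl_top ℓ hl4]; omega
  · rw [phiD_pr0 ℓ hl4]; omega
  · rw [phiD_pr1 ℓ hl4]; omega
  · rw [phiD_sgl ℓ k i hk hk2 hi1 hi2]; omega

def FD (ℓ k : ℕ) (hk : ℓ = 2 * k) (h2 : 2 ≤ k) :
    {p : ℕ → ℕ // IsKacTwoD ℓ p ∧ Even (blackSum ℓ p)} → Fin (k / 2 + 4) :=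
  fun p => ⟨phiD ℓ p.1, phiD_bound ℓ k hk h2 p.1 p.2.1 p.2.2⟩

/-- For `D_ℓ` with `ℓ = 2k` even (`k ≥ 2`), the number of orbits of the diagram
involution `σ` on the set of even Kac 2-labelings (those with
`p₁ + p₃ + ⋯ + p_{ℓ-3} + p_ℓ` even) equals `⌊k/2⌋ + 4`. -/
theorem dl_even_sigma_orbits_card (ℓ k : ℕ) (hk : ℓ = 2 * k) (h2 : 2 ≤ k) :
    Nat.card (Quot (fun (a b : {p : ℕ → ℕ // IsKacTwoD ℓ p ∧ Even (blackSum ℓ p)}) =>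
      b.1 = a.1 ∘ sigmaIdx ℓ)) = k / 2 + 4 := by
  have hl4 : 4 ≤ ℓ := by omega
  have ev_dbl : ∀ i, (i = 0 ∨ i = 1 ∨ i = ℓ - 1 ∨ i = ℓ) → Even (blackSum ℓ (dblD i)) := by
    intro i hi
    rw [Nat.even_iff, blackSum_dbl]
    simp only [mem_F]
    split_ifs <;> first | contradiction | omega | (simp_all <;> omega)
  have ev_pr0 : Even (blackSum ℓ (prD 0 (ℓ - 1))) := by
    rw [Nat.even_iff, blackSum_pr ℓ 0 (ℓ - 1) (by omega)]
    simp only [mem_F]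
    split_ifs <;> first | contradiction | omega | (simp_all <;> omega)
  have ev_pr1 : Even (blackSum ℓ (prD 1 ℓ)) := by
    rw [Nat.even_iff, blackSum_pr ℓ 1 ℓ (by omega)]
    simp only [mem_F]
    split_ifs <;> first | contradiction | omega | (simp_all <;> omega)
  have ev_sgl : ∀ i, 1 ≤ i → i ≤ k - 1 → Even (blackSum ℓ (sglD (2 * i))) := by
    intro i hi1 hi2
    rw [Nat.even_iff, blackSum_sgl]
    simp only [mem_F]
    split_ifs <;> first | contradiction | omega | (simp_all <;> omega)
  have hresp : ∀ a b : {p : ℕ → ℕ // IsKacTwoD ℓ p ∧ Even (blackSum ℓ p)},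
      (b.1 = a.1 ∘ sigmaIdx ℓ) → FD ℓ k hk h2 a = FD ℓ k hk h2 b := by
    intro a b hr
    apply Fin.ext
    show phiD ℓ a.1 = phiD ℓ b.1
    rw [hr]
    exact (phiD_comp ℓ k hk h2 a.1 a.2.1 a.2.2).symm
  have hinj : Function.Injective (Quot.lift (FD ℓ k hk h2) hresp) := by
    intro x y
    induction x using Quot.ind with | _ p => ?_
    induction y using Quot.ind with | _ q => ?_
    intro h
    have hval : phiD ℓ p.1 = phiD ℓ q.1 := congrArg Fin.val h
    rcases orbit_of_phi_eq ℓ k hk h2 p.1 q.1 p.2.1 p.2.2 q.2.1 q.2.2 hval with h' | h' | h'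
    · rw [show p = q from Subtype.ext h']
    · exact Quot.sound (r := fun (a b : {p : ℕ → ℕ // IsKacTwoD ℓ p ∧ Even (blackSum ℓ p)}) => b.1 = a.1 ∘ sigmaIdx ℓ) h'
    · exact (Quot.sound (r := fun (a b : {p : ℕ → ℕ // IsKacTwoD ℓ p ∧ Even (blackSum ℓ p)}) => b.1 = a.1 ∘ sigmaIdx ℓ) h').symm
  have hsurj : Function.Surjective (Quot.lift (FD ℓ k hk h2) hresp) := by
    rintro ⟨n, hn⟩
    match n, hn with
    | 0, hn =>
      refine ⟨Quot.mk _ ⟨dblD 0, kac_dbl ℓ hl4 0 (by omega), ev_dbl 0 (by omega)⟩, ?_⟩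
      exact Fin.ext (phiD_dbl0 ℓ hl4)
    | 1, hn =>
      refine ⟨Quot.mk _ ⟨dblD 1, kac_dbl ℓ hl4 1 (by omega), ev_dbl 1 (by omega)⟩, ?_⟩
      exact Fin.ext (phiD_dbl1 ℓ hl4)
    | 2, hn =>
      refine ⟨Quot.mk _ ⟨prD 0 (ℓ - 1),
        kac_pr ℓ hl4 0 (ℓ - 1) (by omega) (by omega) (by omega), ev_pr0⟩, ?_⟩
      exact Fin.ext (phiD_pr0 ℓ hl4)
    | 3, hn =>
      refine ⟨Quot.mk _ ⟨prD 1 ℓ,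
        kac_pr ℓ hl4 1 ℓ (by omega) (by omega) (by omega), ev_pr1⟩, ?_⟩
      exact Fin.ext (phiD_pr1 ℓ hl4)
    | (m + 4), hn =>
      have hm : m + 1 ≤ k - 1 := by omega
      have hm1 : 1 ≤ m + 1 := by omega
      refine ⟨Quot.mk _ ⟨sglD (2 * (m + 1)),
        kac_sgl ℓ hl4 (2 * (m + 1)) (by omega) (by omega), ev_sgl (m + 1) hm1 hm⟩, ?_⟩
      refine Fin.ext ?_
      show phiD ℓ (sglD (2 * (m + 1))) = m + 4
      rw [phiD_sgl ℓ k (m + 1) hk h2 hm1 hm]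
      omega
  rw [Nat.card_eq_of_bijective (Quot.lift (FD ℓ k hk h2) hresp) ⟨hinj, hsurj⟩,
    Nat.card_eq_fintype_card, Fintype.card_fin]
end

section
/- Let ℓ = 2k ≥ 4 be even. With K_2 and σ as in the half-spin setting (nonnegative integer tuples (p_0,...,p_ℓ) with p_0 + p_1 + 2(p_2+...+p_{ℓ-2}) + p_{ℓ-1} + p_ℓ = 2, and σ the reflection 0 ↔ ℓ-1, 1 ↔ ℓ, j ↔ ℓ-j), call a labeling odd if p_1 + p_3 + ... + p_{ℓ-3} + p_ℓ is odd. Then the number of σ-orbits of odd labelings equals ⌈k/2⌉ + 1. -/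
open scoped BigOperators

/-! ### Auxiliary definitions -/

/-- The labeling supported at a single vertex `j` with value `1`. -/
def sgl (j : ℕ) : ℕ → ℕ := fun i => if i = j then 1 else 0

/-- The labeling supported at two vertices `a, b` with value `1` each. -/
def pr (a b : ℕ) : ℕ → ℕ := fun i => if i = a ∨ i = b then 1 else 0

/-- Weighted position sum, used to read off the support of a single-vertex labeling. -/
def tval (ℓ : ℕ) (p : ℕ → ℕ) : ℕ := ∑ j ∈ Finset.range (ℓ + 1), j * p j

/-- The orbit invariant. -/
def iota (ℓ k : ℕ) (p : ℕ → ℕ) : ℕ :=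
  if p 0 = 0 ∧ p 1 = 0 ∧ p (ℓ - 1) = 0 ∧ p ℓ = 0 then
    (min (tval ℓ p) (ℓ - tval ℓ p) - 3) / 2
  else if p 0 * p 1 + p (ℓ - 1) * p ℓ ≠ 0 then (k - 1) / 2 else (k - 1) / 2 + 1

/-- Orbit representatives. -/
def repD (ℓ k i : ℕ) : ℕ → ℕ :=
  if i < (k-1)/2 then sgl (2*i+3) else if i = (k-1)/2 then pr 0 1 else pr 0 ℓ

/-! ### Elementary sum lemmas -/

lemma sum_sgl (s : Finset ℕ) (f : ℕ → ℕ) (j : ℕ) :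
    ∑ i ∈ s, f i * sgl j i = if j ∈ s then f j else 0 := by
  simp [sgl, mul_ite, Finset.sum_ite_eq']

lemma sum_sgl' (s : Finset ℕ) (j : ℕ) :
    ∑ i ∈ s, sgl j i = if j ∈ s then 1 else 0 := by
  simp [sgl, Finset.sum_ite_eq']

lemma sum_eq_one {s : Finset ℕ} {f : ℕ → ℕ} (h : ∑ i ∈ s, f i = 1) :
    ∃ j ∈ s, f j = 1 ∧ ∀ i ∈ s, i ≠ j → f i = 0 := by
  obtain ⟨j, hj, hfj⟩ := Finset.exists_ne_zero_of_sum_ne_zero (by omega : ∑ i ∈ s, f i ≠ 0)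
  have h1 : f j ≤ 1 := h ▸ Finset.single_le_sum (fun i _ => Nat.zero_le _) hj
  have hadd := Finset.add_sum_erase s f hj
  refine ⟨j, hj, by omega, fun i hi hij => ?_⟩
  exact Finset.sum_eq_zero_iff.mp (by omega) i (Finset.mem_erase.mpr ⟨hij, hi⟩)

lemma decomp (ℓ : ℕ) (hℓ : 4 ≤ ℓ) (p : ℕ → ℕ) :
    ∑ j ∈ Finset.range (ℓ + 1), markD ℓ j * p j
      = p 0 + p 1 + 2 * (∑ j ∈ Finset.Ico 2 (ℓ - 1), p j) + p (ℓ - 1) + p ℓ := by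
  have h1 : (Finset.Ico 0 2) ∪ Finset.Ico 2 (ℓ - 1) ∪ Finset.Ico (ℓ-1) (ℓ+1)
      = Finset.range (ℓ+1) := by
    rw [Finset.Ico_union_Ico_eq_Ico (by omega) (by omega),
      Finset.Ico_union_Ico_eq_Ico (by omega) (by omega), Finset.range_eq_Ico]
  rw [← h1, Finset.sum_union, Finset.sum_union]
  · have e1 : ∑ j ∈ Finset.Ico 0 2, markD ℓ j * p j = p 0 + p 1 := by
      rw [show (2:ℕ) = 0 + 1 + 1 by rfl, Finset.sum_Ico_succ_top (by omega),
        Finset.sum_Ico_succ_top (by omega)]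
      simp [markD]
    have e2 : ∑ j ∈ Finset.Ico 2 (ℓ-1), markD ℓ j * p j
        = 2 * ∑ j ∈ Finset.Ico 2 (ℓ-1), p j := by
      rw [Finset.mul_sum]
      refine Finset.sum_congr rfl fun j hj => ?_
      simp only [Finset.mem_Ico] at hj
      have : markD ℓ j = 2 := by simp only [markD]; rw [if_neg (by omega)]
      rw [this]
    have e3 : ∑ j ∈ Finset.Ico (ℓ-1) (ℓ+1), markD ℓ j * p j = p (ℓ-1) + p ℓ := by
      rw [show ℓ + 1 = (ℓ - 1) + 1 + 1 by omega, Finset.sum_Ico_succ_top (by omega),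
        Finset.sum_Ico_succ_top (by omega), show ℓ - 1 + 1 = ℓ by omega]
      have m1 : markD ℓ (ℓ-1) = 1 := by simp [markD]
      have m2 : markD ℓ ℓ = 1 := by simp [markD]
      simp [m1, m2]
    rw [e1, e2, e3]; ring
  all_goals rw [Finset.disjoint_left]; intro a ha hb <;>
    simp only [Finset.mem_Ico, Finset.mem_union] at ha hb <;> omega

lemma blackSum_sgl_s10 (ℓ j : ℕ) (hℓ : 4 ≤ ℓ) (hj : j ≤ ℓ - 3) :
    blackSum ℓ (sgl j) = if Odd j ∧ j < ℓ - 2 then 1 else 0 := by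
  unfold blackSum
  rw [sum_sgl']
  have hℓj : sgl j ℓ = 0 := by
    have : ℓ ≠ j := by omega
    simp [sgl, this]
  rw [hℓj, add_zero]
  simp only [Finset.mem_filter, Finset.mem_range]
  congr 1
  simp [and_comm]

/-! ### Classification of odd Kac 2-labelings -/

lemma classify (ℓ k : ℕ) (hk : ℓ = 2 * k) (h2 : 2 ≤ k) (p : ℕ → ℕ)
    (h : IsKacTwoD ℓ p) (ho : ¬ Even (blackSum ℓ p)) :
    (∃ j, Odd j ∧ 3 ≤ j ∧ j ≤ ℓ - 3 ∧ p = sgl j) ∨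
    p = pr 0 1 ∨ p = pr (ℓ-1) ℓ ∨ p = pr 0 ℓ ∨ p = pr 1 (ℓ-1) := by
  have hℓ : 4 ≤ ℓ := by omega
  obtain ⟨htail, hsum⟩ := h
  rw [decomp ℓ hℓ p] at hsum
  set M := ∑ j ∈ Finset.Ico 2 (ℓ - 1), p j with hM
  rcases Nat.lt_or_ge 0 M with hM1 | hM0
  · -- M = 1, extremes zero
    have hMle : M ≤ 1 := by omega
    have hM1' : M = 1 := by omega
    have hz : p 0 = 0 ∧ p 1 = 0 ∧ p (ℓ-1) = 0 ∧ p ℓ = 0 := by omega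
    obtain ⟨j, hjmem, hpj, hrest⟩ := sum_eq_one
      (show ∑ j ∈ Finset.Ico 2 (ℓ-1), p j = 1 by rw [← hM]; exact hM1')
    simp only [Finset.mem_Ico] at hjmem
    have hp : p = sgl j := by
      funext i
      by_cases hij : i = j
      · simp [sgl, hij, hpj]
      · have : p i = 0 := by
          rcases Nat.lt_or_ge ℓ i with hi | hi
          · exact htail i hi
          · rcases Nat.lt_or_ge i 2 with h2i | h2i
            · rcases (by omega : i = 0 ∨ i = 1) with rfl | rfl
              exacts [hz.1, hz.2.1]
            · rcases Nat.lt_or_ge i (ℓ-1) with h3i | h3i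
              · exact hrest i (Finset.mem_Ico.mpr ⟨h2i, h3i⟩) hij
              · rcases (by omega : i = ℓ - 1 ∨ i = ℓ) with rfl | rfl
                exacts [hz.2.2.1, hz.2.2.2]
        simp [sgl, hij, this]
    left
    subst hp
    have hjle : j ≤ ℓ - 2 := by omega
    by_cases hcase : j ≤ ℓ - 3
    · rw [blackSum_sgl_s10 ℓ j hℓ hcase] at ho
      by_cases hodd : Odd j ∧ j < ℓ - 2
      · refine ⟨j, hodd.1, ?_, hcase, rfl⟩
        obtain ⟨m, hm⟩ := hodd.1; omega
      · rw [if_neg hodd] at ho; simp at ho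
    · -- j = ℓ - 2, blackSum even
      exfalso
      have hj2 : j = ℓ - 2 := by omega
      unfold blackSum at ho
      rw [sum_sgl'] at ho
      have : sgl j ℓ = 0 := by simp [sgl]; omega
      rw [this, add_zero] at ho
      rw [if_neg (by simp [Finset.mem_filter, Finset.mem_range]; omega)] at ho
      simp at ho
  · -- M = 0
    have hmid : ∀ i ∈ Finset.Ico 2 (ℓ-1), p i = 0 :=
      Finset.sum_eq_zero_iff.mp (by omega)
    have hbs : blackSum ℓ p = p 1 + p ℓ := by
      unfold blackSum
      congr 1
      refine Finset.sum_eq_single_of_mem 1 ?_ fun b hb hb1 => ?_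
      · simp [Finset.mem_filter, Finset.mem_range]; omega
      · simp only [Finset.mem_filter, Finset.mem_range] at hb
        obtain ⟨hblt, m, hm⟩ := hb
        exact hmid b (Finset.mem_Ico.mpr ⟨by omega, by omega⟩)
    rw [hbs] at ho
    have h1 : p 1 + p ℓ = 1 := by
      rcases Nat.even_or_odd (p 1 + p ℓ) with he | hodd
      · exact absurd he ho
      · obtain ⟨m, hm⟩ := hodd; omega
    have hext : p 0 + p 1 + p (ℓ-1) + p ℓ = 2 := by omega
    have key : ∀ i, 2 ≤ i → i ≤ ℓ - 2 → p i = 0 := fun i hi hi' =>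
      hmid i (Finset.mem_Ico.mpr ⟨hi, by omega⟩)
    have hfun : ∀ a b : ℕ, a ≠ b → p a = 1 → p b = 1 →
        (∀ i, i ≤ ℓ → i ≠ a → i ≠ b → p i = 0) → p = pr a b := by
      intro a b hab ha hb hrest
      funext i
      by_cases hia : i = a
      · simp [pr, hia, ha]
      · by_cases hib : i = b
        · simp [pr, hib, hb]
        · have : p i = 0 := by
            rcases Nat.lt_or_ge ℓ i with hi | hi
            · exact htail i hi
            · exact hrest i hi hia hib
          simp [pr, hia, hib, this]
    have hzero : ∀ i, i ≤ ℓ → i ≠ 0 → i ≠ 1 → i ≠ ℓ - 1 → i ≠ ℓ → p i = 0 := by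
      intro i hi h0 h1 h2 h3
      exact key i (by omega) (by omega)
    rcases (by omega : (p 0 = 1 ∧ p 1 = 1 ∧ p (ℓ-1) = 0 ∧ p ℓ = 0) ∨
        (p 0 = 0 ∧ p 1 = 1 ∧ p (ℓ-1) = 1 ∧ p ℓ = 0) ∨
        (p 0 = 1 ∧ p 1 = 0 ∧ p (ℓ-1) = 0 ∧ p ℓ = 1) ∨
        (p 0 = 0 ∧ p 1 = 0 ∧ p (ℓ-1) = 1 ∧ p ℓ = 1)) with
      ⟨a0,a1,a2,a3⟩ | ⟨a0,a1,a2,a3⟩ | ⟨a0,a1,a2,a3⟩ | ⟨a0,a1,a2,a3⟩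
    · right; left
      exact hfun 0 1 (by omega) a0 a1 (fun i hi hi0 hi1 => by
        by_cases hℓ1 : i = ℓ - 1
        · rw [hℓ1]; exact a2
        · by_cases hℓ2 : i = ℓ
          · rw [hℓ2]; exact a3
          · exact hzero i hi hi0 hi1 hℓ1 hℓ2)
    · right; right; right; right
      exact hfun 1 (ℓ-1) (by omega) a1 a2 (fun i hi hi0 hi1 => by
        by_cases hℓ1 : i = 0
        · rw [hℓ1]; exact a0
        · by_cases hℓ2 : i = ℓ
          · rw [hℓ2]; exact a3
          · exact hzero i hi hℓ1 hi0 hi1 hℓ2)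
    · right; right; right; left
      exact hfun 0 ℓ (by omega) a0 a3 (fun i hi hi0 hi1 => by
        by_cases hℓ1 : i = 1
        · rw [hℓ1]; exact a1
        · by_cases hℓ2 : i = ℓ - 1
          · rw [hℓ2]; exact a2
          · exact hzero i hi hi0 hℓ1 hℓ2 hi1)
    · right; right; left
      exact hfun (ℓ-1) ℓ (by omega) a2 a3 (fun i hi hi0 hi1 => by
        by_cases hℓ1 : i = 0
        · rw [hℓ1]; exact a0
        · by_cases hℓ2 : i = 1
          · rw [hℓ2]; exact a1
          · exact hzero i hi hℓ1 hℓ2 hi0 hi1)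

/-! ### Values of the involution -/

lemma sig0 (ℓ : ℕ) (hℓ : 4 ≤ ℓ) : sigmaIdx ℓ 0 = ℓ - 1 := by simp [sigmaIdx]
lemma sig1 (ℓ : ℕ) (hℓ : 4 ≤ ℓ) : sigmaIdx ℓ 1 = ℓ := by simp [sigmaIdx]
lemma sigl1 (ℓ : ℕ) (hℓ : 4 ≤ ℓ) : sigmaIdx ℓ (ℓ-1) = 0 := by
  have h1 : ℓ - 1 ≠ 0 := by omega
  have h2 : ℓ - 1 ≠ 1 := by omega
  simp [sigmaIdx, h1, h2]
lemma sigl (ℓ : ℕ) (hℓ : 4 ≤ ℓ) : sigmaIdx ℓ ℓ = 1 := by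
  have h1 : ℓ ≠ 0 := by omega
  have h2 : ℓ ≠ 1 := by omega
  have h3 : ℓ ≠ ℓ - 1 := by omega
  simp [sigmaIdx, h1, h2, h3]
lemma sigmid (ℓ i : ℕ) (hℓ : 4 ≤ ℓ) (h1 : 2 ≤ i) (h2 : i ≤ ℓ - 2) :
    sigmaIdx ℓ i = ℓ - i := by
  have e1 : i ≠ 0 := by omega
  have e2 : i ≠ 1 := by omega
  have e3 : i ≠ ℓ - 1 := by omega
  have e4 : i ≠ ℓ := by omega
  have e5 : i ≤ ℓ := by omega
  simp [sigmaIdx, e1, e2, e3, e4, e5]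
lemma sighigh (ℓ i : ℕ) (hℓ : 4 ≤ ℓ) (h : ℓ < i) : sigmaIdx ℓ i = i := by
  have e1 : i ≠ 0 := by omega
  have e2 : i ≠ 1 := by omega
  have e3 : i ≠ ℓ - 1 := by omega
  have e4 : i ≠ ℓ := by omega
  have e5 : ¬ i ≤ ℓ := by omega
  simp [sigmaIdx, e1, e2, e3, e4, e5]

lemma pr_add (a b : ℕ) (hab : a ≠ b) (i : ℕ) : pr a b i = sgl a i + sgl b i := by
  by_cases ha : i = a
  · subst ha; simp [pr, sgl, hab]
  · by_cases hb : i = b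
    · subst hb; simp [pr, sgl, ha]
    · simp [pr, sgl, ha, hb]

/-! ### Compositions with the involution -/

lemma comp_sgl (ℓ k j : ℕ) (hk : ℓ = 2 * k) (h2 : 2 ≤ k) (h3 : 3 ≤ j) (h4 : j ≤ ℓ - 3) :
    sgl (ℓ - j) = sgl j ∘ sigmaIdx ℓ := by
  have hℓ : 4 ≤ ℓ := by omega
  funext i
  simp only [Function.comp_apply]
  rcases (by omega : i = 0 ∨ i = 1 ∨ i = ℓ - 1 ∨ i = ℓ ∨ (2 ≤ i ∧ i ≤ ℓ - 2) ∨ ℓ < i) with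
    rfl | rfl | h | h | ⟨ha, hb⟩ | h
  · rw [sig0 ℓ hℓ]; simp only [sgl]; split_ifs <;> first | omega | simp_all
  · rw [sig1 ℓ hℓ]; simp only [sgl]; split_ifs <;> first | omega | simp_all
  · rw [h, sigl1 ℓ hℓ]; simp only [sgl]; split_ifs <;> first | omega | simp_all
  · rw [h, sigl ℓ hℓ]; simp only [sgl]; split_ifs <;> first | omega | simp_all
  · rw [sigmid ℓ i hℓ ha hb]; simp only [sgl]; split_ifs <;> first | omega | simp_all
  · rw [sighigh ℓ i hℓ h]; simp only [sgl]; split_ifs <;> first | omega | simp_all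

lemma comp_pr01 (ℓ k : ℕ) (hk : ℓ = 2 * k) (h2 : 2 ≤ k) :
    pr (ℓ-1) ℓ = pr 0 1 ∘ sigmaIdx ℓ := by
  have hℓ : 4 ≤ ℓ := by omega
  funext i
  simp only [Function.comp_apply]
  rw [pr_add (ℓ-1) ℓ (by omega) i, pr_add 0 1 (by omega) (sigmaIdx ℓ i)]
  rcases (by omega : i = 0 ∨ i = 1 ∨ i = ℓ - 1 ∨ i = ℓ ∨ (2 ≤ i ∧ i ≤ ℓ - 2) ∨ ℓ < i) with
    rfl | rfl | h | h | ⟨ha, hb⟩ | h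
  · rw [sig0 ℓ hℓ]; simp only [sgl]; split_ifs <;> first | omega | simp_all
  · rw [sig1 ℓ hℓ]; simp only [sgl]; split_ifs <;> first | omega | simp_all
  · rw [h, sigl1 ℓ hℓ]; simp only [sgl]; split_ifs <;> first | omega | simp_all
  · rw [h, sigl ℓ hℓ]; simp only [sgl]; split_ifs <;> first | omega | simp_all
  · rw [sigmid ℓ i hℓ ha hb]; simp only [sgl]; split_ifs <;> first | omega | simp_all
  · rw [sighigh ℓ i hℓ h]; simp only [sgl]; split_ifs <;> first | omega | simp_all

lemma comp_pr01r (ℓ k : ℕ) (hk : ℓ = 2 * k) (h2 : 2 ≤ k) :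
    pr 0 1 = pr (ℓ-1) ℓ ∘ sigmaIdx ℓ := by
  have hℓ : 4 ≤ ℓ := by omega
  funext i
  simp only [Function.comp_apply]
  rw [pr_add 0 1 (by omega) i, pr_add (ℓ-1) ℓ (by omega) (sigmaIdx ℓ i)]
  rcases (by omega : i = 0 ∨ i = 1 ∨ i = ℓ - 1 ∨ i = ℓ ∨ (2 ≤ i ∧ i ≤ ℓ - 2) ∨ ℓ < i) with
    rfl | rfl | h | h | ⟨ha, hb⟩ | h
  · rw [sig0 ℓ hℓ]; simp only [sgl]; split_ifs <;> first | omega | simp_all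
  · rw [sig1 ℓ hℓ]; simp only [sgl]; split_ifs <;> first | omega | simp_all
  · rw [h, sigl1 ℓ hℓ]; simp only [sgl]; split_ifs <;> first | omega | simp_all
  · rw [h, sigl ℓ hℓ]; simp only [sgl]; split_ifs <;> first | omega | simp_all
  · rw [sigmid ℓ i hℓ ha hb]; simp only [sgl]; split_ifs <;> first | omega | simp_all
  · rw [sighigh ℓ i hℓ h]; simp only [sgl]; split_ifs <;> first | omega | simp_all

lemma comp_pr0l (ℓ k : ℕ) (hk : ℓ = 2 * k) (h2 : 2 ≤ k) :
    pr 1 (ℓ-1) = pr 0 ℓ ∘ sigmaIdx ℓ := by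
  have hℓ : 4 ≤ ℓ := by omega
  funext i
  simp only [Function.comp_apply]
  rw [pr_add 1 (ℓ-1) (by omega) i, pr_add 0 ℓ (by omega) (sigmaIdx ℓ i)]
  rcases (by omega : i = 0 ∨ i = 1 ∨ i = ℓ - 1 ∨ i = ℓ ∨ (2 ≤ i ∧ i ≤ ℓ - 2) ∨ ℓ < i) with
    rfl | rfl | h | h | ⟨ha, hb⟩ | h
  · rw [sig0 ℓ hℓ]; simp only [sgl]; split_ifs <;> first | omega | simp_all
  · rw [sig1 ℓ hℓ]; simp only [sgl]; split_ifs <;> first | omega | simp_all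
  · rw [h, sigl1 ℓ hℓ]; simp only [sgl]; split_ifs <;> first | omega | simp_all
  · rw [h, sigl ℓ hℓ]; simp only [sgl]; split_ifs <;> first | omega | simp_all
  · rw [sigmid ℓ i hℓ ha hb]; simp only [sgl]; split_ifs <;> first | omega | simp_all
  · rw [sighigh ℓ i hℓ h]; simp only [sgl]; split_ifs <;> first | omega | simp_all

lemma comp_pr0lr (ℓ k : ℕ) (hk : ℓ = 2 * k) (h2 : 2 ≤ k) :
    pr 0 ℓ = pr 1 (ℓ-1) ∘ sigmaIdx ℓ := by
  have hℓ : 4 ≤ ℓ := by omega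
  funext i
  simp only [Function.comp_apply]
  rw [pr_add 0 ℓ (by omega) i, pr_add 1 (ℓ-1) (by omega) (sigmaIdx ℓ i)]
  rcases (by omega : i = 0 ∨ i = 1 ∨ i = ℓ - 1 ∨ i = ℓ ∨ (2 ≤ i ∧ i ≤ ℓ - 2) ∨ ℓ < i) with
    rfl | rfl | h | h | ⟨ha, hb⟩ | h
  · rw [sig0 ℓ hℓ]; simp only [sgl]; split_ifs <;> first | omega | simp_all
  · rw [sig1 ℓ hℓ]; simp only [sgl]; split_ifs <;> first | omega | simp_all
  · rw [h, sigl1 ℓ hℓ]; simp only [sgl]; split_ifs <;> first | omega | simp_all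
  · rw [h, sigl ℓ hℓ]; simp only [sgl]; split_ifs <;> first | omega | simp_all
  · rw [sigmid ℓ i hℓ ha hb]; simp only [sgl]; split_ifs <;> first | omega | simp_all
  · rw [sighigh ℓ i hℓ h]; simp only [sgl]; split_ifs <;> first | omega | simp_all

/-! ### The representatives are odd Kac 2-labelings -/

lemma kac_sgl_s10 (ℓ j : ℕ) (hℓ : 4 ≤ ℓ) (h2 : 2 ≤ j) (h3 : j ≤ ℓ - 2) :
    IsKacTwoD ℓ (sgl j) := by
  constructor
  · intro i hi; simp [sgl]; omega
  · rw [Finset.sum_congr rfl (fun i _ => rfl), sum_sgl]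
    rw [if_pos (Finset.mem_range.mpr (by omega))]
    simp only [markD]; rw [if_neg (by omega)]

lemma kac_pr_s10 (ℓ a b : ℕ) (hℓ : 4 ≤ ℓ) (ha : a ≤ ℓ) (hb : b ≤ ℓ) (hab : a ≠ b)
    (ma : markD ℓ a = 1) (mb : markD ℓ b = 1) : IsKacTwoD ℓ (pr a b) := by
  constructor
  · intro i hi; simp [pr]; omega
  · have : ∀ i ∈ Finset.range (ℓ+1), markD ℓ i * pr a b i
        = markD ℓ i * sgl a i + markD ℓ i * sgl b i := by
      intro i _; rw [pr_add a b hab, Nat.mul_add]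
    rw [Finset.sum_congr rfl this, Finset.sum_add_distrib, sum_sgl, sum_sgl,
      if_pos (Finset.mem_range.mpr (by omega)), if_pos (Finset.mem_range.mpr (by omega)),
      ma, mb]

lemma tval_sgl (ℓ j : ℕ) (hj : j ≤ ℓ) : tval ℓ (sgl j) = j := by
  unfold tval
  rw [sum_sgl, if_pos (Finset.mem_range.mpr (by omega))]

lemma iota_sgl (ℓ k j : ℕ) (hℓ : 4 ≤ ℓ) (h3 : 3 ≤ j) (h4 : j ≤ ℓ - 3) :
    iota ℓ k (sgl j) = (min j (ℓ - j) - 3) / 2 := by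
  have v0 : sgl j 0 = 0 := by simp [sgl]; omega
  have v1 : sgl j 1 = 0 := by simp [sgl]; omega
  have v2 : sgl j (ℓ-1) = 0 := by simp [sgl]; omega
  have v3 : sgl j ℓ = 0 := by simp [sgl]; omega
  rw [iota, if_pos ⟨v0, v1, v2, v3⟩, tval_sgl ℓ j (by omega)]

lemma iota_pr01 (ℓ k : ℕ) (hℓ : 4 ≤ ℓ) : iota ℓ k (pr 0 1) = (k-1)/2 := by
  have v0 : pr 0 1 0 = 1 := by simp [pr]
  have v1 : pr 0 1 1 = 1 := by simp [pr]
  have v2 : pr 0 1 (ℓ-1) = 0 := by simp [pr]; omega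
  have v3 : pr 0 1 ℓ = 0 := by simp [pr]; omega
  rw [iota, if_neg (by simp [v0]), if_pos (by rw [v0, v1, v2, v3]; simp)]

lemma iota_prl1l (ℓ k : ℕ) (hℓ : 4 ≤ ℓ) : iota ℓ k (pr (ℓ-1) ℓ) = (k-1)/2 := by
  have v2 : pr (ℓ-1) ℓ (ℓ-1) = 1 := by simp [pr]
  have v3 : pr (ℓ-1) ℓ ℓ = 1 := by simp [pr]
  rw [iota, if_neg (by simp [v3]), if_pos (by rw [v2, v3]; simp)]

lemma iota_pr0l (ℓ k : ℕ) (hℓ : 4 ≤ ℓ) : iota ℓ k (pr 0 ℓ) = (k-1)/2 + 1 := by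
  have v0 : pr 0 ℓ 0 = 1 := by simp [pr]
  have v1 : pr 0 ℓ 1 = 0 := by simp [pr]; omega
  have v2 : pr 0 ℓ (ℓ-1) = 0 := by simp [pr]; omega
  rw [iota, if_neg (by simp [v0]), if_neg (by rw [v1, v2]; simp)]

lemma iota_pr1l1 (ℓ k : ℕ) (hℓ : 4 ≤ ℓ) : iota ℓ k (pr 1 (ℓ-1)) = (k-1)/2 + 1 := by
  have v0 : pr 1 (ℓ-1) 0 = 0 := by simp [pr]; omega
  have v1 : pr 1 (ℓ-1) 1 = 1 := by simp [pr]
  have v3 : pr 1 (ℓ-1) ℓ = 0 := by simp [pr]; omega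
  rw [iota, if_neg (by simp [v1]), if_neg (by rw [v0, v3]; simp)]

lemma blackSum_sgl_gen (ℓ j : ℕ) :
    blackSum ℓ (sgl j) =
      (if j ∈ (Finset.range (ℓ - 2)).filter (fun j => Odd j) then 1 else 0)
        + (if ℓ = j then 1 else 0) := by
  unfold blackSum
  rw [sum_sgl']
  rfl

lemma blackSum_pr_s10 (ℓ a b : ℕ) (hab : a ≠ b) :
    blackSum ℓ (pr a b) = blackSum ℓ (sgl a) + blackSum ℓ (sgl b) := by
  unfold blackSum
  rw [Finset.sum_congr rfl (fun i _ => pr_add a b hab i), Finset.sum_add_distrib,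
    pr_add a b hab ℓ]
  ring

lemma repD_mem (ℓ k i : ℕ) (hk : ℓ = 2 * k) (h2 : 2 ≤ k) (hi : i < (k-1)/2 + 2) :
    IsKacTwoD ℓ (repD ℓ k i) ∧ ¬ Even (blackSum ℓ (repD ℓ k i)) := by
  have hℓ : 4 ≤ ℓ := by omega
  unfold repD
  split_ifs with c1 c2
  · refine ⟨kac_sgl_s10 ℓ _ hℓ (by omega) (by omega), ?_⟩
    rw [blackSum_sgl_s10 ℓ _ hℓ (by omega), if_pos ⟨⟨i+1, by ring⟩, by omega⟩]
    decide
  · have hA : ¬ (Odd 0 ∧ 0 < ℓ - 2) := by rintro ⟨h, -⟩; simp at h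
    have hB : Odd 1 ∧ 1 < ℓ - 2 := ⟨odd_one, by omega⟩
    have b1 : blackSum ℓ (pr 0 1) = 1 := by
      rw [blackSum_pr_s10 ℓ 0 1 (by omega), blackSum_sgl_s10 ℓ 0 hℓ (by omega),
        blackSum_sgl_s10 ℓ 1 hℓ (by omega), if_neg hA, if_pos hB]
    exact ⟨kac_pr_s10 ℓ 0 1 hℓ (by omega) (by omega) (by omega) (by simp [markD]) (by simp [markD]),
      by rw [b1]; decide⟩
  · have hA : ¬ (Odd 0 ∧ 0 < ℓ - 2) := by rintro ⟨h, -⟩; simp at h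
    have hC : ¬ (ℓ ∈ (Finset.range (ℓ-2)).filter (fun j => Odd j)) := by
      intro h
      have := (Finset.mem_filter.mp h).1
      rw [Finset.mem_range] at this; omega
    have b1 : blackSum ℓ (pr 0 ℓ) = 1 := by
      rw [blackSum_pr_s10 ℓ 0 ℓ (by omega), blackSum_sgl_s10 ℓ 0 hℓ (by omega), blackSum_sgl_gen ℓ ℓ,
        if_neg hA, if_neg hC, if_pos rfl]
    exact ⟨kac_pr_s10 ℓ 0 ℓ hℓ (by omega) (by omega) (by omega) (by simp [markD]) (by simp [markD]),
      by rw [b1]; decide⟩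

lemma iota_repD (ℓ k i : ℕ) (hk : ℓ = 2 * k) (h2 : 2 ≤ k) (hi : i < (k-1)/2 + 2) :
    iota ℓ k (repD ℓ k i) = i := by
  have hℓ : 4 ≤ ℓ := by omega
  unfold repD
  split_ifs with c1 c2
  · rw [iota_sgl ℓ k _ hℓ (by omega) (by omega)]
    omega
  · rw [iota_pr01 ℓ k hℓ]; omega
  · rw [iota_pr0l ℓ k hℓ]; omega

/-! ### The counting map -/

/-- Map from `Fin ((k-1)/2 + 2)` onto the set of σ-orbits. -/
def fmap (ℓ k : ℕ) (hk : ℓ = 2 * k) (h2 : 2 ≤ k) (i : Fin ((k-1)/2 + 2)) :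
    Quot (fun (a b : {p : ℕ → ℕ // IsKacTwoD ℓ p ∧ ¬ Even (blackSum ℓ p)}) =>
      b.1 = a.1 ∘ sigmaIdx ℓ) :=
  Quot.mk _ ⟨repD ℓ k i.1, repD_mem ℓ k i.1 hk h2 i.2⟩

lemma fmap_bij (ℓ k : ℕ) (hk : ℓ = 2 * k) (h2 : 2 ≤ k) :
    Function.Bijective (fmap ℓ k hk h2) := by
  have hℓ : 4 ≤ ℓ := by omega
  have hlift : ∀ a b : {p : ℕ → ℕ // IsKacTwoD ℓ p ∧ ¬ Even (blackSum ℓ p)},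
      (b.1 = a.1 ∘ sigmaIdx ℓ) → iota ℓ k a.1 = iota ℓ k b.1 := by
    rintro a b hab
    rcases classify ℓ k hk h2 a.1 a.2.1 a.2.2 with ⟨j, hodd, h3, h4, hp⟩ | hp | hp | hp | hp
    · have hb : b.1 = sgl (ℓ - j) := by rw [hab, hp, ← comp_sgl ℓ k j hk h2 h3 h4]
      rw [hp, hb, iota_sgl ℓ k j hℓ h3 h4, iota_sgl ℓ k (ℓ-j) hℓ (by omega) (by omega)]
      omega
    · have hb : b.1 = pr (ℓ-1) ℓ := by rw [hab, hp, ← comp_pr01 ℓ k hk h2]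
      rw [hp, hb, iota_pr01 ℓ k hℓ, iota_prl1l ℓ k hℓ]
    · have hb : b.1 = pr 0 1 := by rw [hab, hp, ← comp_pr01r ℓ k hk h2]
      rw [hp, hb, iota_prl1l ℓ k hℓ, iota_pr01 ℓ k hℓ]
    · have hb : b.1 = pr 1 (ℓ-1) := by rw [hab, hp, ← comp_pr0l ℓ k hk h2]
      rw [hp, hb, iota_pr0l ℓ k hℓ, iota_pr1l1 ℓ k hℓ]
    · have hb : b.1 = pr 0 ℓ := by rw [hab, hp, ← comp_pr0lr ℓ k hk h2]
      rw [hp, hb, iota_pr1l1 ℓ k hℓ, iota_pr0l ℓ k hℓ]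
  constructor
  · -- injectivity via the lifted invariant
    intro i j hij
    have hi := iota_repD ℓ k i.1 hk h2 i.2
    have hj := iota_repD ℓ k j.1 hk h2 j.2
    have : Quot.lift (fun a => iota ℓ k a.1) hlift (fmap ℓ k hk h2 i)
        = Quot.lift (fun a => iota ℓ k a.1) hlift (fmap ℓ k hk h2 j) := by rw [hij]
    simp only [fmap, Quot.lift_mk] at this
    exact Fin.ext (by rw [← hi, ← hj]; exact this)
  · -- surjectivity via the classification
    intro x
    induction x using Quot.ind with
    | _ a =>
    rcases classify ℓ k hk h2 a.1 a.2.1 a.2.2 with ⟨j, hodd, h3, h4, hp⟩ | hp | hp | hp | hp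
    · obtain ⟨t, ht⟩ := hodd
      rcases le_or_gt j (ℓ - j) with hle | hlt
      · refine ⟨⟨(j-3)/2, by omega⟩, ?_⟩
        have hb1 : (j-3)/2 < (k-1)/2 := by omega
        have he : repD ℓ k ((j-3)/2) = sgl j := by
          rw [repD, if_pos hb1, show 2*((j-3)/2)+3 = j by omega]
        refine congrArg (Quot.mk _) (Subtype.ext ?_)
        exact he.trans hp.symm
      · refine ⟨⟨(ℓ-j-3)/2, by omega⟩, ?_⟩
        have hb1 : (ℓ-j-3)/2 < (k-1)/2 := by omega
        have he : repD ℓ k ((ℓ-j-3)/2) = sgl (ℓ - j) := by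
          rw [repD, if_pos hb1, show 2*((ℓ-j-3)/2)+3 = ℓ - j by omega]
        have hc := comp_sgl ℓ k (ℓ-j) hk h2 (by omega) (by omega)
        rw [show ℓ - (ℓ - j) = j by omega] at hc
        have h' : a.1 = repD ℓ k ((ℓ-j-3)/2) ∘ sigmaIdx ℓ := by
          rw [hp, he]; exact hc
        refine Quot.sound ?_
        exact h'
    · refine ⟨⟨(k-1)/2, by omega⟩, ?_⟩
      have hb1 : ¬ ((k-1)/2 < (k-1)/2) := by omega
      have he : repD ℓ k ((k-1)/2) = pr 0 1 := by
        rw [repD, if_neg hb1, if_pos rfl]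
      refine congrArg (Quot.mk _) (Subtype.ext ?_)
      exact he.trans hp.symm
    · refine ⟨⟨(k-1)/2, by omega⟩, ?_⟩
      have hb1 : ¬ ((k-1)/2 < (k-1)/2) := by omega
      have he : repD ℓ k ((k-1)/2) = pr 0 1 := by
        rw [repD, if_neg hb1, if_pos rfl]
      have h' : a.1 = repD ℓ k ((k-1)/2) ∘ sigmaIdx ℓ := by
        rw [hp, he]; exact comp_pr01 ℓ k hk h2
      refine Quot.sound ?_
      exact h'
    · refine ⟨⟨(k-1)/2 + 1, by omega⟩, ?_⟩
      have hb1 : ¬ ((k-1)/2 + 1 < (k-1)/2) := by omega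
      have hb2 : ¬ ((k-1)/2 + 1 = (k-1)/2) := by omega
      have he : repD ℓ k ((k-1)/2 + 1) = pr 0 ℓ := by
        rw [repD, if_neg hb1, if_neg hb2]
      refine congrArg (Quot.mk _) (Subtype.ext ?_)
      exact he.trans hp.symm
    · refine ⟨⟨(k-1)/2 + 1, by omega⟩, ?_⟩
      have hb1 : ¬ ((k-1)/2 + 1 < (k-1)/2) := by omega
      have hb2 : ¬ ((k-1)/2 + 1 = (k-1)/2) := by omega
      have he : repD ℓ k ((k-1)/2 + 1) = pr 0 ℓ := by
        rw [repD, if_neg hb1, if_neg hb2]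
      have h' : a.1 = repD ℓ k ((k-1)/2 + 1) ∘ sigmaIdx ℓ := by
        rw [hp, he]; exact comp_pr0l ℓ k hk h2
      refine Quot.sound ?_
      exact h'

/-- For `D_ℓ` with `ℓ = 2k` even (`k ≥ 2`), the number of orbits of the diagram
involution `σ` on the set of odd Kac 2-labelings (those with
`p₁ + p₃ + ⋯ + p_{ℓ-3} + p_ℓ` odd) equals `⌈k/2⌉ + 1`. -/
theorem dl_odd_sigma_orbits_card (ℓ k : ℕ) (hk : ℓ = 2 * k) (h2 : 2 ≤ k) :
    Nat.card (Quot (fun (a b : {p : ℕ → ℕ // IsKacTwoD ℓ p ∧ ¬ Even (blackSum ℓ p)}) =>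
      b.1 = a.1 ∘ sigmaIdx ℓ)) = (k + 1) / 2 + 1 := by
  have hcard := Nat.card_eq_of_bijective (fmap ℓ k hk h2) (fmap_bij ℓ k hk h2)
  rw [← hcard, Nat.card_eq_fintype_card, Fintype.card_fin]
  omega
end
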